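/- arXiv:1903.11270 — 7 statements merged into one kernel-verified Lean document; each statement's English description precedes it below -/
import Mathlib

section
/- Consider the single-shot problem with one remote unit, two users indexed 0 and 1, four resource blocks, total capacity C = 7, weights 1/R_0 = 1 and 1/R_1 = 1/2, and channel rates γ_{0k} = 1 and γ_{1k} = 4 for every resource block k. The Proportional Fair assignment (which assigns each resource block to the user maximizing γ_{jk}/R_j, i.e. user 1 on all four blocks) achieves objective value at most 7/2, whereas the assignment giving user 0 three blocks at rate 1 each and user 1 one block at rate 4 is feasible and achieves objective value 5. Hence the Proportional Fair assignment is not optimal. -/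
/-- Objective value `Σ_{j,k} y j k / R j` for the single-RU single-shot problem. -/
noncomputable def objective0 (R : Fin 2 → ℝ) (y : Fin 2 → Fin 4 → ℝ) : ℝ :=
  ∑ j, ∑ k, y j k / R j

/-- Feasibility of `(x, y)` for the single-RU single-shot problem with
channel rates `γ` and total capacity `C`. -/
def Feasible0 (γ : Fin 2 → Fin 4 → ℝ) (C : ℝ)
    (x : Fin 2 → Fin 4 → Bool) (y : Fin 2 → Fin 4 → ℝ) : Prop :=
  (∀ k : Fin 4, ∀ j j' : Fin 2, x j k = true → x j' k = true → j = j') ∧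
  (∀ j k, 0 ≤ y j k ∧ y j k ≤ γ j k * (if x j k then 1 else 0)) ∧
  (∑ j, ∑ k, y j k) ≤ C

/-- Sub-optimality of the Proportional Fair scheduler: with `C = 7`,
`R 0 = 1`, `R 1 = 2`, `γ 0 k = 1`, `γ 1 k = 4`, the PF assignment (user 1 on
every block) achieves at most `7/2`, while another feasible solution achieves `5`. -/
theorem pf_suboptimal
    (R : Fin 2 → ℝ) (γ : Fin 2 → Fin 4 → ℝ) (C : ℝ)
    (hR0 : R 0 = 1) (hR1 : R 1 = 2)
    (hγ0 : ∀ k, γ 0 k = 1) (hγ1 : ∀ k, γ 1 k = 4) (hC : C = 7)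
    (xPF : Fin 2 → Fin 4 → Bool)
    (hxPF : ∀ k, xPF 1 k = true ∧ xPF 0 k = false) :
    (∀ y, Feasible0 γ C xPF y → objective0 R y ≤ 7 / 2) ∧
    (∃ x y, Feasible0 γ C x y ∧ objective0 R y = 5) := by
  constructor
  · intro y hy
    obtain ⟨hx, hb, hs⟩ := hy
    have h0 : ∀ k, y 0 k = 0 := by
      intro k
      have := (hb 0 k).2
      rw [(hxPF k).2] at this
      simp at this
      exact le_antisymm this (hb 0 k).1
    have hsum1 : ∑ k, y 1 k ≤ 7 := by
      have : (∑ j, ∑ k, y j k) = ∑ k, y 0 k + ∑ k, y 1 k := by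
        simp [Fin.sum_univ_two]
      rw [this] at hs
      simp [h0] at hs
      linarith [hC ▸ hs]
    have : objective0 R y = (∑ k, y 1 k) / 2 := by
      simp [objective0, Fin.sum_univ_two, h0, hR0, hR1, Finset.sum_div]
    rw [this]
    linarith
  · refine ⟨fun j k => if j = 0 then decide (k ≠ 3) else decide (k = 3),
      fun j k => if j = 0 then (if k = 3 then 0 else 1) else (if k = 3 then 4 else 0), ?_, ?_⟩
    · refine ⟨?_, ?_, ?_⟩
      · intro k j j' hj hj'
        fin_cases j <;> fin_cases j' <;> fin_cases k <;> simp_all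
      · intro j k
        fin_cases j <;> fin_cases k <;> simp [hγ0, hγ1]
      · rw [hC]
        simp [Fin.sum_univ_two, Fin.sum_univ_four]
        norm_num
    · simp [objective0, Fin.sum_univ_two, Fin.sum_univ_four, hR0, hR1]
      norm_num
end

section
/- Fix a feasible binary assignment x (with at most one user per resource block per remote unit). If the greedy water-filling allocation y — obtained by ordering the assigned triples (i,j,k) in decreasing order of 1/R_{ij} and setting each y_{ijk} to the minimum of γ_{ijk}x_{ijk}, the remaining total capacity C minus the sum already allocated, and the remaining per-RU capacity C_i minus the sum already allocated at RU i — then y maximizes Σ_{ijk} y_{ijk}/R_{ij} over all rate vectors feasible for x. -/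
variable {ι υ κ : Type*}

section
variable [Fintype ι] [Fintype υ] [Fintype κ] [DecidableEq ι] [DecidableEq υ] [DecidableEq κ]

/-- Greedy water-filling: process the triples in the list in order, allocating to each
the minimum of its channel rate, the remaining total capacity, and the remaining
capacity at its remote unit. -/
noncomputable def waterFill (γ : ι × υ × κ → ℝ) (C : ℝ) (Ci : ι → ℝ) :
    List (ι × υ × κ) → (ι × υ × κ → ℝ) → (ι × υ × κ → ℝ)
  | [], y => y
  | t :: rest, y =>
      waterFill γ C Ci rest
        (Function.update y t
          (min (γ t)
            (min (C - ∑ s, y s)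
              (Ci t.1 - ∑ s ∈ Finset.univ.filter (fun s : ι × υ × κ => s.1 = t.1), y s))))

/-- `y` is a feasible rate vector for the binary assignment `x`. -/
def FeasibleRates (γ : ι × υ × κ → ℝ) (C : ℝ) (Ci : ι → ℝ)
    (x : ι × υ × κ → Bool) (y : ι × υ × κ → ℝ) : Prop :=
  (∀ t, 0 ≤ y t ∧ y t ≤ γ t * (if x t then 1 else 0)) ∧
  (∀ i : ι, (∑ t ∈ Finset.univ.filter (fun t : ι × υ × κ => t.1 = i), y t) ≤ Ci i) ∧
  (∑ t, y t) ≤ C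

noncomputable def reduceBy : List (ι × υ × κ) → ((ι × υ × κ) → ℝ) → ℝ → ((ι × υ × κ) → ℝ)
  | [], f, _ => f
  | a :: l, f, e => reduceBy l (Function.update f a (f a - min (f a) e)) (e - min (f a) e)

lemma reduceBy_nonneg_le :
    ∀ (l : List (ι × υ × κ)) (f : (ι × υ × κ) → ℝ) (e : ℝ),
      (∀ s, 0 ≤ f s) → 0 ≤ e → ∀ s, 0 ≤ reduceBy l f e s ∧ reduceBy l f e s ≤ f s := by
  intro l
  induction l with
  | nil => intro f e hf he s; exact ⟨hf s, le_refl _⟩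
  | cons a l ih =>
    intro f e hf he s
    have hf' : ∀ s, 0 ≤ Function.update f a (f a - min (f a) e) s := by
      intro s
      by_cases h : s = a
      · rw [h, Function.update_self]; have := min_le_left (f a) e; linarith
      · rw [Function.update_of_ne h]; exact hf s
    have he' : (0:ℝ) ≤ e - min (f a) e := by
      have := min_le_right (f a) e; linarith
    have h := ih _ _ hf' he' s
    refine ⟨h.1, h.2.trans ?_⟩
    by_cases hs : s = a
    · rw [hs, Function.update_self]
      have : 0 ≤ min (f a) e := le_min (hf a) he
      linarith
    · rw [Function.update_of_ne hs]

lemma reduceBy_not_mem :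
    ∀ (l : List (ι × υ × κ)) (f : (ι × υ × κ) → ℝ) (e : ℝ) (s), s ∉ l →
      reduceBy l f e s = f s := by
  intro l
  induction l with
  | nil => intro f e s _; rfl
  | cons a l ih =>
    intro f e s hs
    have h1 : s ≠ a := fun h => hs (h ▸ List.mem_cons_self (a := a) (l := l))
    have h2 : s ∉ l := fun h => hs (List.mem_cons_of_mem a h)
    rw [reduceBy, ih _ _ _ h2, Function.update_of_ne h1]

lemma reduceBy_sum :
    ∀ (l : List (ι × υ × κ)), l.Nodup → ∀ (f : (ι × υ × κ) → ℝ) (e : ℝ),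
      (∀ s, 0 ≤ f s) → 0 ≤ e → e ≤ ∑ s ∈ l.toFinset, f s →
      ∑ s, reduceBy l f e s = (∑ s, f s) - e := by
  intro l
  induction l with
  | nil =>
    intro _ f e _ he hle
    simp only [List.toFinset_nil, Finset.sum_empty] at hle
    have : e = 0 := le_antisymm hle he
    simp [reduceBy, this]
  | cons a l ih =>
    intro hnd f e hf he hle
    have hal : a ∉ l := (List.nodup_cons.mp hnd).1
    have hnd' : l.Nodup := (List.nodup_cons.mp hnd).2
    set m := min (f a) e with hm
    have hm0 : 0 ≤ m := le_min (hf a) he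
    have hmf : m ≤ f a := min_le_left _ _
    have hme : m ≤ e := min_le_right _ _
    set f' := Function.update f a (f a - m) with hf'def
    have hf' : ∀ s, 0 ≤ f' s := by
      intro s
      by_cases h : s = a
      · rw [h, hf'def, Function.update_self]; linarith
      · rw [hf'def, Function.update_of_ne h]; exact hf s
    have hsumf' : ∑ s, f' s = (∑ s, f s) - m := by
      rw [hf'def, Finset.sum_update_of_mem (Finset.mem_univ a),
        Finset.sdiff_singleton_eq_erase, Finset.sum_erase_eq_sub (Finset.mem_univ a)]
      ring
    have hflist : ∀ s ∈ l.toFinset, f' s = f s := by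
      intro s hs
      have : s ≠ a := by
        intro h; exact hal (h ▸ (List.mem_toFinset.mp hs))
      rw [hf'def, Function.update_of_ne this]
    have hle' : e - m ≤ ∑ s ∈ l.toFinset, f' s := by
      rw [Finset.sum_congr rfl hflist]
      have htf : ∑ s ∈ (a :: l).toFinset, f s = f a + ∑ s ∈ l.toFinset, f s := by
        rw [List.toFinset_cons, Finset.sum_insert (by simpa using hal)]
      by_cases h : f a ≤ e
      · have : m = f a := min_eq_left h
        rw [this]; rw [htf] at hle; linarith
      · have : m = e := min_eq_right (le_of_not_ge h)
        rw [this]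
        simp only [sub_self]
        exact Finset.sum_nonneg fun s _ => hf s
    rw [reduceBy, ih hnd' f' (e - m) hf' (by linarith) hle', hsumf']
    ring
lemma waterFill_not_mem (γ : ι × υ × κ → ℝ) (C : ℝ) (Ci : ι → ℝ) :
    ∀ (L : List (ι × υ × κ)) (y0 : ι × υ × κ → ℝ) (s : ι × υ × κ), s ∉ L →
      waterFill γ C Ci L y0 s = y0 s := by
  intro L
  induction L with
  | nil => intro y0 s _; rfl
  | cons t rest ih =>
    intro y0 s hs
    have h1 : s ≠ t := fun h => hs (h ▸ List.mem_cons_self (a := t) (l := rest))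
    have h2 : s ∉ rest := fun h => hs (List.mem_cons_of_mem t h)
    rw [waterFill, ih _ _ h2, Function.update_of_ne h1]

lemma waterFill_congr (γ : ι × υ × κ → ℝ) :
    ∀ (L : List (ι × υ × κ)) (C C' : ℝ) (Ci Ci' : ι → ℝ) (y0 y1 : ι × υ × κ → ℝ),
      (∀ s ∈ L, y0 s = y1 s) →
      C - ∑ s, y0 s = C' - ∑ s, y1 s →
      (∀ i, Ci i - ∑ s ∈ Finset.univ.filter (fun s : ι × υ × κ => s.1 = i), y0 s
          = Ci' i - ∑ s ∈ Finset.univ.filter (fun s : ι × υ × κ => s.1 = i), y1 s) →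
      ∀ s ∈ L, waterFill γ C Ci L y0 s = waterFill γ C' Ci' L y1 s := by
  intro L
  induction L with
  | nil => intro _ _ _ _ _ _ _ _ _ s hs; exact absurd hs (List.not_mem_nil (a := s))
  | cons t rest ih =>
    intro C C' Ci Ci' y0 y1 hagree hCs hCis s hs
    have hyt : y0 t = y1 t := hagree t (List.mem_cons_self (a := t) (l := rest))
    set v := min (γ t) (min (C - ∑ s, y0 s)
      (Ci t.1 - ∑ s ∈ Finset.univ.filter (fun s : ι × υ × κ => s.1 = t.1), y0 s)) with hv
    have hveq : v = min (γ t) (min (C' - ∑ s, y1 s)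
        (Ci' t.1 - ∑ s ∈ Finset.univ.filter (fun s : ι × υ × κ => s.1 = t.1), y1 s)) := by
      rw [hv, hCs, hCis t.1]
    set y0' := Function.update y0 t v with hy0'
    set y1' := Function.update y1 t v with hy1'
    have hstep : waterFill γ C Ci (t :: rest) y0 = waterFill γ C Ci rest y0' := by
      rw [waterFill]
    have hstep' : waterFill γ C' Ci' (t :: rest) y1 = waterFill γ C' Ci' rest y1' := by
      rw [waterFill, ← hveq]
    rw [hstep, hstep']
    have hagree' : ∀ s ∈ rest, y0' s = y1' s := by
      intro s hs
      by_cases h : s = t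
      · rw [h, hy0', hy1', Function.update_self, Function.update_self]
      · rw [hy0', hy1', Function.update_of_ne h, Function.update_of_ne h]
        exact hagree s (List.mem_cons_of_mem t hs)
    have hsum0 : ∑ s, y0' s = (∑ s, y0 s) - y0 t + v := by
      rw [hy0', Finset.sum_update_of_mem (Finset.mem_univ t),
        Finset.sdiff_singleton_eq_erase, Finset.sum_erase_eq_sub (Finset.mem_univ t)]
      ring
    have hsum1 : ∑ s, y1' s = (∑ s, y1 s) - y1 t + v := by
      rw [hy1', Finset.sum_update_of_mem (Finset.mem_univ t),
        Finset.sdiff_singleton_eq_erase, Finset.sum_erase_eq_sub (Finset.mem_univ t)]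
      ring
    have hCs' : C - ∑ s, y0' s = C' - ∑ s, y1' s := by
      rw [hsum0, hsum1, hyt]; linarith
    have hCis' : ∀ i, Ci i - ∑ s ∈ Finset.univ.filter (fun s : ι × υ × κ => s.1 = i), y0' s
        = Ci' i - ∑ s ∈ Finset.univ.filter (fun s : ι × υ × κ => s.1 = i), y1' s := by
      intro i
      by_cases h : t.1 = i
      · have ht : t ∈ Finset.univ.filter (fun s : ι × υ × κ => s.1 = i) := by
          simp [Finset.mem_filter, h]
        have h0 : ∑ s ∈ Finset.univ.filter (fun s : ι × υ × κ => s.1 = i), y0' s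
            = (∑ s ∈ Finset.univ.filter (fun s : ι × υ × κ => s.1 = i), y0 s) - y0 t + v := by
          rw [hy0', Finset.sum_update_of_mem ht,
            Finset.sdiff_singleton_eq_erase, Finset.sum_erase_eq_sub ht]
          ring
        have h1 : ∑ s ∈ Finset.univ.filter (fun s : ι × υ × κ => s.1 = i), y1' s
            = (∑ s ∈ Finset.univ.filter (fun s : ι × υ × κ => s.1 = i), y1 s) - y1 t + v := by
          rw [hy1', Finset.sum_update_of_mem ht,
            Finset.sdiff_singleton_eq_erase, Finset.sum_erase_eq_sub ht]
          ring
        rw [h0, h1, hyt]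
        have := hCis i
        linarith
      · have h0 : ∑ s ∈ Finset.univ.filter (fun s : ι × υ × κ => s.1 = i), y0' s
            = ∑ s ∈ Finset.univ.filter (fun s : ι × υ × κ => s.1 = i), y0 s := by
          refine Finset.sum_congr rfl fun s hs => ?_
          have : s ≠ t := by
            intro he
            rw [he] at hs
            exact h (Finset.mem_filter.mp hs).2
          rw [hy0', Function.update_of_ne this]
        have h1 : ∑ s ∈ Finset.univ.filter (fun s : ι × υ × κ => s.1 = i), y1' s
            = ∑ s ∈ Finset.univ.filter (fun s : ι × υ × κ => s.1 = i), y1 s := by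
          refine Finset.sum_congr rfl fun s hs => ?_
          have : s ≠ t := by
            intro he
            rw [he] at hs
            exact h (Finset.mem_filter.mp hs).2
          rw [hy1', Function.update_of_ne this]
        rw [h0, h1]
        exact hCis i
    rcases List.mem_cons.mp hs with h | h
    · by_cases hmem : s ∈ rest
      · exact ih _ _ _ _ _ _ hagree' hCs' hCis' s hmem
      · rw [waterFill_not_mem _ _ _ _ _ _ hmem, waterFill_not_mem _ _ _ _ _ _ hmem,
          h, hy0', hy1', Function.update_self, Function.update_self]
    · exact ih _ _ _ _ _ _ hagree' hCs' hCis' s h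

lemma greedy_opt (w γ : ι × υ × κ → ℝ) (hγ : ∀ t, 0 ≤ γ t) :
    ∀ (L : List (ι × υ × κ)), L.Nodup → L.Pairwise (fun s t => w t ≤ w s) →
    (∀ s ∈ L, 0 ≤ w s) →
    ∀ (C : ℝ), 0 ≤ C → ∀ (Ci : ι → ℝ), (∀ i, 0 ≤ Ci i) →
    ∀ (y' : ι × υ × κ → ℝ), (∀ s, 0 ≤ y' s) → (∀ s ∈ L, y' s ≤ γ s) →
    (∀ s, s ∉ L → y' s = 0) →
    (∀ i, ∑ s ∈ Finset.univ.filter (fun s : ι × υ × κ => s.1 = i), y' s ≤ Ci i) →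
    (∑ s, y' s) ≤ C →
    ∑ s, w s * y' s ≤ ∑ s, w s * waterFill γ C Ci L (fun _ => 0) s := by
  intro L
  induction L with
  | nil =>
    intro _ _ _ C _ Ci _ y' _ _ hzero _ _
    have hz : ∀ s, y' s = 0 := fun s => hzero s (List.not_mem_nil (a := s))
    simp [waterFill, hz]
  | cons t rest ih =>
    intro hnd hsort hw C hC Ci hCi y' hy0 hyγ hysupp hygrp hytot
    have htr : t ∉ rest := (List.nodup_cons.mp hnd).1
    have hnd' : rest.Nodup := (List.nodup_cons.mp hnd).2
    have hsort' : rest.Pairwise (fun s t => w t ≤ w s) := hsort.of_cons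
    have hwrest : ∀ s ∈ rest, w s ≤ w t := fun s hs => List.rel_of_pairwise_cons hsort hs
    have hw' : ∀ s ∈ rest, 0 ≤ w s := fun s hs => hw s (List.mem_cons_of_mem _ hs)
    have hwt : 0 ≤ w t := hw t (List.mem_cons_self (a := t) (l := rest))
    set i0 := t.1 with hi0
    set a := min (γ t) (min C (Ci i0)) with ha
    have ha0 : 0 ≤ a := le_min (hγ t) (le_min hC (hCi i0))
    have haγ : a ≤ γ t := min_le_left _ _
    have haC : a ≤ C := le_trans (min_le_right _ _) (min_le_left _ _)
    have haCi : a ≤ Ci i0 := le_trans (min_le_right _ _) (min_le_right _ _)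
    set b := y' t with hb
    have hb0 : 0 ≤ b := hy0 t
    have hbγ : b ≤ γ t := hyγ t (List.mem_cons_self (a := t) (l := rest))
    have hbC : b ≤ C :=
      le_trans (Finset.single_le_sum (fun s _ => hy0 s) (Finset.mem_univ t)) hytot
    have htP : t ∈ Finset.univ.filter (fun s : ι × υ × κ => s.1 = i0) := by
      simp [hi0]
    have hbCi : b ≤ Ci i0 :=
      le_trans (Finset.single_le_sum (fun s _ => hy0 s) htP) (hygrp i0)
    have hba : b ≤ a := le_min hbγ (le_min hbC hbCi)
    set G := rest.filter (fun s => s.1 = i0) with hG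
    have hGsub : ∀ s ∈ G, s ∈ rest ∧ s.1 = i0 := by
      intro s hs
      rw [hG, List.mem_filter] at hs
      exact ⟨hs.1, by simpa using hs.2⟩
    have hGnd : G.Nodup := hnd'.filter _
    have htG : t ∉ G := fun h => htr (hGsub t h).1
    set g := ∑ s ∈ G.toFinset, y' s with hg
    have hg0 : 0 ≤ g := Finset.sum_nonneg fun s _ => hy0 s
    have hPsum : ∑ s ∈ Finset.univ.filter (fun s : ι × υ × κ => s.1 = i0), y' s = b + g := by
      have hsub : insert t G.toFinset ⊆
          Finset.univ.filter (fun s : ι × υ × κ => s.1 = i0) := by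
        intro s hs
        rcases Finset.mem_insert.mp hs with h | h
        · rw [h]; exact htP
        · simp only [Finset.mem_filter, Finset.mem_univ, true_and]
          exact (hGsub s (List.mem_toFinset.mp h)).2
      have hvan : ∀ s ∈ Finset.univ.filter (fun s : ι × υ × κ => s.1 = i0),
          s ∉ insert t G.toFinset → y' s = 0 := by
        intro s hsP hsn
        by_cases hsL : s ∈ t :: rest
        · exfalso
          rcases List.mem_cons.mp hsL with h | h
          · exact hsn (h ▸ Finset.mem_insert_self t G.toFinset)
          · refine hsn (Finset.mem_insert_of_mem (List.mem_toFinset.mpr ?_))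
            rw [hG, List.mem_filter]
            refine ⟨h, by simpa using (Finset.mem_filter.mp hsP).2⟩
        · exact hysupp s hsL
      rw [← Finset.sum_subset hsub hvan, Finset.sum_insert (by simpa using htG)]
    set e1 := max 0 (g - (Ci i0 - a)) with he1
    have he10 : 0 ≤ e1 := le_max_left _ _
    have he1g : e1 ≤ g := max_le hg0 (by linarith)
    have he1d : e1 ≤ a - b := by
      refine max_le (by linarith) ?_
      have := hygrp i0
      rw [hPsum] at this
      linarith
    set y1 := reduceBy G y' e1 with hy1
    have hy1p := reduceBy_nonneg_le G y' e1 hy0 he10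
    have hy1sum : ∑ s, y1 s = (∑ s, y' s) - e1 :=
      reduceBy_sum G hGnd y' e1 hy0 he10 (by rw [← hg]; exact he1g)
    have hy1t : y1 t = b := by rw [hy1, reduceBy_not_mem _ _ _ _ htG]
    have hbley1 : b ≤ ∑ s, y1 s := by
      have h := Finset.single_le_sum (f := y1) (fun s _ => (hy1p s).1) (Finset.mem_univ t)
      rw [hy1t] at h
      exact h
    set e2 := max 0 ((∑ s, y1 s) - b - (C - a)) with he2
    have he20 : 0 ≤ e2 := le_max_left _ _
    have he2le : e2 ≤ (∑ s, y1 s) - b := max_le (by linarith) (by linarith)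
    have hXle : (∑ s, y1 s) - b - (C - a) ≤ a - b - e1 := by rw [hy1sum]; linarith
    have he2d : e2 ≤ a - b - e1 := max_le (by linarith) hXle
    have hy1supp : ∀ s, s ∉ t :: rest → y1 s = 0 := by
      intro s hs
      have h1 := (hy1p s).2
      have h2 := (hy1p s).1
      have := hysupp s hs
      linarith
    have hrestsum : ∑ s ∈ rest.toFinset, y1 s = (∑ s, y1 s) - b := by
      have huniv : ∑ s, y1 s = ∑ s ∈ (t :: rest).toFinset, y1 s := by
        refine (Finset.sum_subset (Finset.subset_univ _) ?_).symm
        intro s _ hs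
        exact hy1supp s (by simpa using hs)
      rw [huniv, List.toFinset_cons, Finset.sum_insert (by simpa using htr), hy1t]
      ring
    set y2 := reduceBy rest y1 e2 with hy2
    have hy2p := reduceBy_nonneg_le rest y1 e2 (fun s => (hy1p s).1) he20
    have hy2sum : ∑ s, y2 s = (∑ s, y1 s) - e2 :=
      reduceBy_sum rest hnd' y1 e2 (fun s => (hy1p s).1) he20 (by rw [hrestsum]; exact he2le)
    have hy2t : y2 t = b := by rw [hy2, reduceBy_not_mem _ _ _ _ htr, hy1t]
    set y'' := Function.update y2 t 0 with hy''
    have hy''p : ∀ s, 0 ≤ y'' s ∧ y'' s ≤ y' s := by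
      intro s
      by_cases h : s = t
      · rw [h, hy'', Function.update_self]
        exact ⟨le_refl 0, hb0⟩
      · rw [hy'', Function.update_of_ne h]
        exact ⟨(hy2p s).1, le_trans (hy2p s).2 (hy1p s).2⟩
    have hy''t : y'' t = 0 := by rw [hy'', Function.update_self]
    have hy''sum : ∑ s, y'' s = (∑ s, y' s) - e1 - e2 - b := by
      rw [hy'', Finset.sum_update_of_mem (Finset.mem_univ t), Finset.sdiff_singleton_eq_erase,
        Finset.sum_erase_eq_sub (Finset.mem_univ t), hy2t, hy2sum, hy1sum]
      ring
    have hy''γ : ∀ s ∈ rest, y'' s ≤ γ s :=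
      fun s hs => le_trans (hy''p s).2 (hyγ s (List.mem_cons_of_mem t hs))
    have hy''supp : ∀ s, s ∉ rest → y'' s = 0 := by
      intro s hs
      by_cases h : s = t
      · rw [h]; exact hy''t
      · have hsL : s ∉ t :: rest := by
          intro hmem'
          rcases List.mem_cons.mp hmem' with h' | h'
          · exact h h'
          · exact hs h'
        have h0 := hysupp s hsL
        have h1 := (hy''p s).1
        have h2 := (hy''p s).2
        linarith
    have hy''tot : ∑ s, y'' s ≤ C - a := by
      have hX : (∑ s, y1 s) - b - (C - a) ≤ e2 := le_max_right _ _
      rw [hy1sum] at hX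
      rw [hy''sum]
      linarith
    have hy1grp : ∑ s ∈ Finset.univ.filter (fun s : ι × υ × κ => s.1 = i0), y1 s
        = (∑ s ∈ Finset.univ.filter (fun s : ι × υ × κ => s.1 = i0), y' s) - e1 := by
      have hoff : ∀ s ∈ Finset.univ.filter (fun s : ι × υ × κ => ¬ s.1 = i0), y1 s = y' s := by
        intro s hs
        have hsG : s ∉ G := fun hG' => (Finset.mem_filter.mp hs).2 (hGsub s hG').2
        rw [hy1, reduceBy_not_mem _ _ _ _ hsG]
      have hsplit := Finset.sum_filter_add_sum_filter_not Finset.univ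
        (fun s : ι × υ × κ => s.1 = i0) y1
      have hsplit' := Finset.sum_filter_add_sum_filter_not Finset.univ
        (fun s : ι × υ × κ => s.1 = i0) y'
      have hco : ∑ s ∈ Finset.univ.filter (fun s : ι × υ × κ => ¬ s.1 = i0), y1 s
          = ∑ s ∈ Finset.univ.filter (fun s : ι × υ × κ => ¬ s.1 = i0), y' s :=
        Finset.sum_congr rfl hoff
      rw [hy1sum] at hsplit
      linarith
    have hy''grpi0 : ∑ s ∈ Finset.univ.filter (fun s : ι × υ × κ => s.1 = i0), y'' s
        ≤ Ci i0 - a := by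
      have hupd : ∑ s ∈ Finset.univ.filter (fun s : ι × υ × κ => s.1 = i0), y'' s
          = (∑ s ∈ Finset.univ.filter (fun s : ι × υ × κ => s.1 = i0), y2 s) - b := by
        rw [hy'', Finset.sum_update_of_mem htP, Finset.sdiff_singleton_eq_erase,
          Finset.sum_erase_eq_sub htP, hy2t]
        ring
      have hle12 : ∑ s ∈ Finset.univ.filter (fun s : ι × υ × κ => s.1 = i0), y2 s
          ≤ ∑ s ∈ Finset.univ.filter (fun s : ι × υ × κ => s.1 = i0), y1 s :=
        Finset.sum_le_sum fun s _ => (hy2p s).2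
      have he1ge : g - (Ci i0 - a) ≤ e1 := le_max_right _ _
      rw [hupd]
      rw [hy1grp, hPsum] at hle12
      linarith
    set Ci' := Function.update Ci i0 (Ci i0 - a) with hCi'
    have hy''grp : ∀ i, ∑ s ∈ Finset.univ.filter (fun s : ι × υ × κ => s.1 = i), y'' s
        ≤ Ci' i := by
      intro i
      by_cases h : i = i0
      · rw [h, hCi', Function.update_self]
        exact hy''grpi0
      · rw [hCi', Function.update_of_ne h]
        exact le_trans (Finset.sum_le_sum fun s _ => (hy''p s).2) (hygrp i)
    have hCi'0 : ∀ i, 0 ≤ Ci' i := by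
      intro i
      by_cases h : i = i0
      · rw [h, hCi', Function.update_self]; linarith
      · rw [hCi', Function.update_of_ne h]; exact hCi i
    have hIH := ih hnd' hsort' hw' (C - a) (by linarith) Ci' hCi'0 y''
      (fun s => (hy''p s).1) hy''γ hy''supp hy''grp hy''tot
    set z := waterFill γ (C - a) Ci' rest (fun _ => 0) with hz
    have hzt : z t = 0 := waterFill_not_mem _ _ _ _ _ _ htr
    set y0' := Function.update (fun _ : ι × υ × κ => (0:ℝ)) t a with hy0'
    have hsum0' : ∑ s, y0' s = a := by
      rw [hy0', Finset.sum_update_of_mem (Finset.mem_univ t)]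
      simp
    have hstep : waterFill γ C Ci (t :: rest) (fun _ => 0)
        = waterFill γ C Ci rest y0' := by
      rw [waterFill]
      congr 1
      rw [hy0']
      congr 1
      rw [ha]
      norm_num
      rfl
    have hY : ∀ s, waterFill γ C Ci (t :: rest) (fun _ => 0) s
        = Function.update z t a s := by
      intro s
      rw [hstep]
      by_cases h : s = t
      · rw [h, Function.update_self, waterFill_not_mem _ _ _ _ _ _ htr, hy0',
          Function.update_self]
      · rw [Function.update_of_ne h]
        by_cases hs : s ∈ rest
        · refine waterFill_congr γ rest C (C - a) Ci Ci' y0' (fun _ => 0) ?_ ?_ ?_ s hs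
          · intro u hu
            have : u ≠ t := fun he => htr (he ▸ hu)
            rw [hy0', Function.update_of_ne this]
          · rw [hsum0']
            simp
          · intro i
            by_cases hii : i0 = i
            · have hti : t ∈ Finset.univ.filter (fun s : ι × υ × κ => s.1 = i) := by
                simp [← hii, hi0]
              have : ∑ u ∈ Finset.univ.filter (fun s : ι × υ × κ => s.1 = i), y0' u = a := by
                rw [hy0', Finset.sum_update_of_mem hti]
                simp
              rw [this, hCi', ← hii, Function.update_self]
              simp
            · have : ∑ u ∈ Finset.univ.filter (fun s : ι × υ × κ => s.1 = i), y0' u = 0 := by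
                refine Finset.sum_eq_zero fun u hu => ?_
                have : u ≠ t := by
                  intro he
                  exact hii ((he ▸ (Finset.mem_filter.mp hu).2).symm ▸ rfl)
                rw [hy0', Function.update_of_ne this]
              rw [this, hCi', Function.update_of_ne (fun he => hii he.symm)]
              simp
        · have hsL : s ∉ t :: rest := by
            intro hm
            rcases List.mem_cons.mp hm with h' | h'
            · exact h h'
            · exact hs h'
          rw [waterFill_not_mem _ _ _ _ _ _ hs, hz, waterFill_not_mem _ _ _ _ _ _ hs, hy0',
            Function.update_of_ne h]
    have hsumY : ∑ s, w s * waterFill γ C Ci (t :: rest) (fun _ => 0) s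
        = w t * a + ∑ s, w s * z s := by
      have h1 : ∀ s, w s * waterFill γ C Ci (t :: rest) (fun _ => 0) s
          = Function.update (fun u => w u * z u) t (w t * a) s := by
        intro s
        rw [hY s]
        by_cases h : s = t
        · rw [h, Function.update_self, Function.update_self]
        · rw [Function.update_of_ne h, Function.update_of_ne h]
      rw [Finset.sum_congr rfl fun s _ => h1 s,
        Finset.sum_update_of_mem (Finset.mem_univ t), Finset.sdiff_singleton_eq_erase,
        Finset.sum_erase_eq_sub (Finset.mem_univ t), hzt]
      ring
    have hkey : ∑ s, w s * y' s ≤ w t * a + ∑ s, w s * y'' s := by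
      have hptwise : ∀ s, w s * y' s - w s * y'' s ≤ w t * (y' s - y'' s) := by
        intro s
        rw [← mul_sub]
        by_cases h : s = t
        · rw [h]
        · by_cases hs : s ∈ rest
          · exact mul_le_mul_of_nonneg_right (hwrest s hs)
              (by have := (hy''p s).2; linarith)
          · have hsL : s ∉ t :: rest := by
              intro hm
              rcases List.mem_cons.mp hm with h' | h'
              · exact h h'
              · exact hs h'
            rw [hysupp s hsL, hy''supp s hs]
            norm_num
      have hsumdiff : ∑ s, (y' s - y'' s) = e1 + e2 + b := by
        rw [Finset.sum_sub_distrib, hy''sum]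
        ring
      have h1 : ∑ s, (w s * y' s - w s * y'' s) ≤ ∑ s, w t * (y' s - y'' s) :=
        Finset.sum_le_sum fun s _ => hptwise s
      rw [Finset.sum_sub_distrib, ← Finset.mul_sum, hsumdiff] at h1
      have h2 : w t * (e1 + e2 + b) ≤ w t * a :=
        mul_le_mul_of_nonneg_left (by linarith) hwt
      linarith
    rw [hsumY]
    linarith


/-- Optimality of the greedy water-filling allocation for a fixed feasible RB
assignment `x`: if `L` enumerates the assigned triples in decreasing order of
`1 / R_{ij}` (i.e. nondecreasing `R`), the resulting allocation maximizes
`Σ y_{ijk} / R_{ij}` over all rate vectors feasible for `x`. -/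
theorem waterFill_optimal
    (R : ι → υ → ℝ) (hR : ∀ i j, 0 < R i j)
    (γ : ι × υ × κ → ℝ) (hγ : ∀ t, 0 ≤ γ t)
    (C : ℝ) (hC : 0 ≤ C) (Ci : ι → ℝ) (hCi : ∀ i, 0 ≤ Ci i)
    (x : ι × υ × κ → Bool)
    (hx : ∀ i k, ∀ j j' : υ, x (i, j, k) = true → x (i, j', k) = true → j = j')
    (L : List (ι × υ × κ)) (hnodup : L.Nodup)
    (hmem : ∀ t, t ∈ L ↔ x t = true)
    (hsorted : L.Pairwise (fun s t => R s.1 s.2.1 ≤ R t.1 t.2.1))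
    (y : ι × υ × κ → ℝ) (hy : y = waterFill γ C Ci L (fun _ => 0)) :
    ∀ y', FeasibleRates γ C Ci x y' →
      (∑ t : ι × υ × κ, y' t / R t.1 t.2.1) ≤ ∑ t : ι × υ × κ, y t / R t.1 t.2.1 := by

  intro y' hfeas
  obtain ⟨hbound, hgrp, htot⟩ := hfeas
  set w : ι × υ × κ → ℝ := fun s => (R s.1 s.2.1)⁻¹ with hw
  have hwpos : ∀ s, 0 < w s := fun s => inv_pos.mpr (hR _ _)
  have hconv : ∀ f : ι × υ × κ → ℝ, ∑ s, f s / R s.1 s.2.1 = ∑ s, w s * f s := by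
    intro f
    refine Finset.sum_congr rfl fun s _ => ?_
    rw [hw, div_eq_inv_mul]
  rw [hconv, hconv, hy]
  have hsort' : L.Pairwise (fun s t => w t ≤ w s) := by
    refine List.Pairwise.imp ?_ hsorted
    intro s t h
    exact inv_anti₀ (hR s.1 s.2.1) h
  have hub : ∀ s ∈ L, y' s ≤ γ s := by
    intro s hs
    have hxs := (hmem s).mp hs
    have h2 := (hbound s).2
    rw [hxs] at h2
    simpa using h2
  have hsupp : ∀ s, s ∉ L → y' s = 0 := by
    intro s hs
    have hxs : x s = false := by
      cases hxe : x s
      · rfl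
      · exact absurd ((hmem s).mpr hxe) hs
    have h2 := (hbound s).2
    rw [hxs] at h2
    simp only [Bool.false_eq_true, if_false, mul_zero] at h2
    exact le_antisymm h2 (hbound s).1
  exact greedy_opt w γ hγ L hnodup hsort' (fun s _ => le_of_lt (hwpos s)) C hC Ci hCi y'
    (fun s => (hbound s).1) hub hsupp hgrp htot
end
end

section
/- For the single-shot problem with only the overall capacity constraint, there exists an optimal feasible solution (x, y) that is Almost Discrete: y_{jk} = γ_{jk} x_{jk} for all assigned resource blocks except possibly at most one resource block, for which 0 < y_{jk} < γ_{jk} x_{jk}. -/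
variable {J K : Type*}

section
variable [Fintype J] [Fintype K] [DecidableEq K]

/-- Feasibility for the single-capacity single-shot problem. -/
def Feasible (γ : J → K → ℝ) (C : ℝ) (x : J → K → Bool) (y : J → K → ℝ) : Prop :=
  (∀ k, ∀ j j' : J, x j k = true → x j' k = true → j = j') ∧
  (∀ j k, 0 ≤ y j k ∧ y j k ≤ γ j k * (if x j k then 1 else 0)) ∧
  (∑ j, ∑ k, y j k) ≤ C

/-- `(x, y)` is Almost Discrete: `y j k = γ j k · x j k` for every resource block,
except possibly at most one block. -/
def AlmostDiscrete (γ : J → K → ℝ) (x : J → K → Bool) (y : J → K → ℝ) : Prop :=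
  ∀ k k' : K,
    (¬ ∀ j, y j k = γ j k * (if x j k then 1 else 0)) →
    (¬ ∀ j, y j k' = γ j k' * (if x j k' then 1 else 0)) → k = k'

/-- An optimal solution exists (no almost-discreteness claim yet). -/
lemma exists_optimal (R : J → ℝ) (γ : J → K → ℝ) (hγ : ∀ j k, 0 ≤ γ j k)
    (C : ℝ) (hC : 0 < C) :
    ∃ x y, Feasible γ C x y ∧ ∀ x' y', Feasible γ C x' y' →
      (∑ j, ∑ k, y' j k / R j) ≤ ∑ j, ∑ k, y j k / R j := by
  classical
  set obj : (J → K → ℝ) → ℝ := fun y => ∑ j, ∑ k, y j k / R j with hobj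
  have hopt : ∀ x : J → K → Bool, ∃ y : J → K → ℝ,
      ((∀ j k, 0 ≤ y j k ∧ y j k ≤ γ j k * (if x j k then 1 else 0)) ∧ (∑ j, ∑ k, y j k) ≤ C) ∧
      ∀ y', ((∀ j k, 0 ≤ y' j k ∧ y' j k ≤ γ j k * (if x j k then 1 else 0)) ∧ (∑ j, ∑ k, y' j k) ≤ C) →
        obj y' ≤ obj y := by
    intro x
    set B : J → K → ℝ := fun j k => γ j k * (if x j k then 1 else 0) with hB
    have hBnn : (0 : J → K → ℝ) ≤ B := by
      intro j; intro k
      exact mul_nonneg (hγ j k) (by positivity)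
    set S : Set (J → K → ℝ) := Set.Icc 0 B ∩ {y | (∑ j, ∑ k, y j k) ≤ C} with hS
    have hcmp : IsCompact S := isCompact_Icc.inter_right (isClosed_le (by fun_prop) continuous_const)
    have hne : S.Nonempty := ⟨0, ⟨le_refl _, hBnn⟩, by simp [hC.le]⟩
    have hcont : ContinuousOn obj S := (by fun_prop : Continuous obj).continuousOn
    obtain ⟨y, hyS, hymax⟩ := hcmp.exists_isMaxOn hne hcont
    refine ⟨y, ⟨fun j k => ⟨hyS.1.1 j k, hyS.1.2 j k⟩, hyS.2⟩, ?_⟩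
    intro y' hy'
    exact hymax (⟨⟨fun j k => (hy'.1 j k).1, fun j k => (hy'.1 j k).2⟩, hy'.2⟩ : y' ∈ S)
  choose Y hY1 hY2 using hopt
  set valid : Finset (J → K → Bool) :=
    Finset.univ.filter (fun x => ∀ k, ∀ j j' : J, x j k = true → x j' k = true → j = j') with hv
  have hvne : valid.Nonempty := ⟨fun _ _ => false, by simp [hv]⟩
  obtain ⟨x0, hx0v, hx0max⟩ := valid.exists_max_image (fun x => obj (Y x)) hvne
  refine ⟨x0, Y x0, ⟨(Finset.mem_filter.mp hx0v).2, (hY1 x0).1, (hY1 x0).2⟩, ?_⟩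
  intro x' y' hf
  calc obj y' ≤ obj (Y x') := hY2 x' y' ⟨hf.2.1, hf.2.2⟩
    _ ≤ obj (Y x0) := hx0max x' (Finset.mem_filter.mpr ⟨Finset.mem_univ _, hf.1⟩)

/-- Exchange step: given two distinct fractional blocks, shift mass from the
block whose user has larger `R` to the other, making one block discrete. -/
lemma step [DecidableEq J] (R : J → ℝ) (hR : ∀ j, 0 < R j) (γ : J → K → ℝ) (C : ℝ)
    (x : J → K → Bool) (y : J → K → ℝ) (hf : Feasible γ C x y)
    (k k' : K) (hkk' : k ≠ k') (j j' : J)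
    (hxj : x j k = true) (hyj : y j k < γ j k)
    (hxj' : x j' k' = true) (hyj' : y j' k' < γ j' k')
    (hRlt : R j ≤ R j')
    (hbadk : ¬ ∀ a, y a k = γ a k * (if x a k then 1 else 0))
    (hbadk' : ¬ ∀ a, y a k' = γ a k' * (if x a k' then 1 else 0)) :
    ∃ x2 y2, Feasible γ C x2 y2 ∧
      (∑ a, ∑ b, y a b / R a) ≤ (∑ a, ∑ b, y2 a b / R a) ∧
      ∃ k0, (¬ ∀ a, y a k0 = γ a k0 * (if x a k0 then 1 else 0)) ∧
        ∀ b, (¬ ∀ a, y2 a b = γ a b * (if x2 a b then 1 else 0)) →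
          b ≠ k0 ∧ (¬ ∀ a, y a b = γ a b * (if x a b then 1 else 0)) := by
  obtain ⟨huniq, hbnd, hsum⟩ := hf
  have hkk'2 : k' ≠ k := Ne.symm hkk'
  set ε : ℝ := min (γ j k - y j k) (y j' k') with hε
  have hε0 : 0 ≤ ε := le_min (by linarith) (hbnd j' k').1
  have hεle : ε ≤ γ j k - y j k := min_le_left _ _
  have hεle' : ε ≤ y j' k' := min_le_right _ _
  set y2 : J → K → ℝ := fun a b =>
    y a b + (if a = j ∧ b = k then ε else 0) - (if a = j' ∧ b = k' then ε else 0) with hy2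
  have key : ∀ g : J → ℝ,
      ∑ a, ∑ b, y2 a b * g a = (∑ a, ∑ b, y a b * g a) + ε * g j - ε * g j' := by
    intro g
    have h1 : ∀ a b, y2 a b * g a = y a b * g a + (if b = k ∧ a = j then ε * g j else 0)
        - (if b = k' ∧ a = j' then ε * g j' else 0) := by
      intro a b
      by_cases hA : a = j ∧ b = k
      · simp only [hy2]
        simp [hA.1, hA.2, hkk']
        ring
      · by_cases hB : a = j' ∧ b = k'
        · simp only [hy2]
          simp [hB.1, hB.2, hkk', hkk'2, hA]
          ring
        · have hA2 : ¬ (b = k ∧ a = j) := fun h => hA ⟨h.2, h.1⟩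
          have hB2 : ¬ (b = k' ∧ a = j') := fun h => hB ⟨h.2, h.1⟩
          simp only [hy2]
          simp [hA, hB, hA2, hB2]
    simp only [h1, Finset.sum_add_distrib, Finset.sum_sub_distrib, ite_and,
      Finset.sum_ite_eq', Finset.mem_univ, if_pos, if_true]
  have keysum : ∑ a, ∑ b, y2 a b = ∑ a, ∑ b, y a b := by
    have := key (fun _ => 1); simpa using this
  have keyobj : ∑ a, ∑ b, y2 a b / R a
      = (∑ a, ∑ b, y a b / R a) + ε * (R j)⁻¹ - ε * (R j')⁻¹ := by
    have := key (fun a => (R a)⁻¹)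
    simpa [div_eq_mul_inv] using this
  have hobjle : (∑ a, ∑ b, y a b / R a) ≤ ∑ a, ∑ b, y2 a b / R a := by
    rw [keyobj]
    have : ε * (R j')⁻¹ ≤ ε * (R j)⁻¹ := by
      gcongr
      exact hR j
    linarith
  have hzero : ∀ (b : K) (a0 a : J), x a0 b = true → a ≠ a0 → x a b = false ∧ y a b = 0 := by
    intro b a0 a hx0 hne
    have hxf : x a b = false := by
      cases hxab : x a b with
      | false => rfl
      | true => exact absurd (huniq b a a0 hxab hx0) hne
    refine ⟨hxf, le_antisymm ?_ (hbnd a b).1⟩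
    have := (hbnd a b).2
    rw [hxf] at this; simpa using this
  by_cases hcase : γ j k - y j k ≤ y j' k'
  · -- ε = γ j k - y j k ; block k becomes discrete ; x unchanged
    have hεeq : ε = γ j k - y j k := min_eq_left hcase
    have hgoodk : ∀ a, y2 a k = γ a k * (if x a k then 1 else 0) := by
      intro a
      by_cases ha : a = j
      · simp [hy2, ha, hkk', hxj, hεeq]
      · obtain ⟨hxf, hyzero⟩ := hzero k j a hxj ha
        simp [hy2, ha, hkk', hxf, hyzero]
    refine ⟨x, y2, ⟨huniq, ?_, by rw [keysum]; exact hsum⟩, hobjle, k, hbadk, ?_⟩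
    · intro a b
      by_cases hab : a = j ∧ b = k
      · constructor
        · simp [hy2, hab.1, hab.2, hkk']
          linarith [(hbnd j k).1]
        · simp [hy2, hab.1, hab.2, hkk', hxj]
          linarith
      · by_cases hab' : a = j' ∧ b = k'
        · have h2 : y2 a b = y a b - ε := by
            simp [hy2, hab'.1, hab'.2, hkk'2]
          constructor
          · rw [h2, hab'.1, hab'.2]; linarith
          · rw [h2]
            have h3 := (hbnd a b).2
            linarith
        · have h2 : y2 a b = y a b := by simp [hy2, hab, hab']
          rw [h2]; exact hbnd a b
    · intro b hbad2
      have hbk : b ≠ k := by rintro rfl; exact hbad2 hgoodk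
      refine ⟨hbk, ?_⟩
      by_cases hbk' : b = k'
      · subst hbk'; exact hbadk'
      · intro hgood
        apply hbad2
        intro a
        have : y2 a b = y a b := by simp [hy2, hbk, hbk']
        rw [this]; exact hgood a
  · -- ε = y j' k' ; block k' becomes discrete ; x flipped at (j',k')
    push_neg at hcase
    have hεeq : ε = y j' k' := min_eq_right hcase.le
    set x2 : J → K → Bool := fun a b => if a = j' ∧ b = k' then false else x a b with hx2
    have hx2x : ∀ a b, x2 a b = true → x a b = true := by
      intro a b h
      by_cases hab : a = j' ∧ b = k'
      · rw [hx2] at h; simp only [if_pos hab] at h; exact absurd h (by simp)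
      · rw [hx2] at h; simpa only [if_neg hab] using h
    have hx2jk : x2 j k = true := by
      rw [hx2]
      simp only [if_neg (fun h : j = j' ∧ k = k' => hkk' h.2)]
      exact hxj
    have hy2j'k' : y2 j' k' = 0 := by
      simp [hy2, hkk'2, hεeq]
    have hgoodk' : ∀ a, y2 a k' = γ a k' * (if x2 a k' then 1 else 0) := by
      intro a
      by_cases ha : a = j'
      · subst ha
        rw [hy2j'k', hx2]
        simp
      · obtain ⟨hxf, hyzero⟩ := hzero k' j' a hxj' ha
        have hx2f : x2 a k' = false := by rw [hx2]; simp [ha, hxf]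
        have : y2 a k' = y a k' := by simp [hy2, ha, hkk'2]
        rw [this, hyzero, hx2f]; simp
    refine ⟨x2, y2, ⟨?_, ?_, by rw [keysum]; exact hsum⟩, hobjle, k', hbadk', ?_⟩
    · intro b a a' h1 h2
      exact huniq b a a' (hx2x a b h1) (hx2x a' b h2)
    · intro a b
      by_cases hab : a = j ∧ b = k
      · have hx2ab : x2 a b = true := by rw [hab.1, hab.2]; exact hx2jk
        constructor
        · simp [hy2, hab.1, hab.2, hkk']
          linarith [(hbnd j k).1]
        · simp [hy2, hab.1, hab.2, hkk', hx2jk]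
          linarith
      · by_cases hab' : a = j' ∧ b = k'
        · have h2 : y2 a b = 0 := by rw [hab'.1, hab'.2]; exact hy2j'k'
          have h3 : x2 a b = false := by rw [hx2]; simp [hab'.1, hab'.2]
          rw [h2, h3]; simp
        · have h2 : y2 a b = y a b := by simp [hy2, hab, hab']
          have h3 : x2 a b = x a b := by rw [hx2]; simp [hab']
          rw [h2, h3]; exact hbnd a b
    · intro b hbad2
      have hbk' : b ≠ k' := by rintro rfl; exact hbad2 hgoodk'
      refine ⟨hbk', ?_⟩
      by_cases hbk : b = k
      · subst hbk; exact hbadk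
      · intro hgood
        apply hbad2
        intro a
        have h2 : y2 a b = y a b := by simp [hy2, hbk, hbk']
        have h3 : x2 a b = x a b := by
          rw [hx2]; simp only [if_neg (fun h : a = j' ∧ b = k' => hbk' h.2)]
        rw [h2, h3]; exact hgood a

/-- There exists an optimal solution to the single-capacity single-shot problem
which is Almost Discrete. -/
theorem exists_almostDiscrete_optimal
    (R : J → ℝ) (hR : ∀ j, 0 < R j)
    (γ : J → K → ℝ) (hγ : ∀ j k, 0 ≤ γ j k)
    (C : ℝ) (hC : 0 < C) :
    ∃ x y, Feasible γ C x y ∧ AlmostDiscrete γ x y ∧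
      ∀ x' y', Feasible γ C x' y' →
        (∑ j, ∑ k, y' j k / R j) ≤ ∑ j, ∑ k, y j k / R j := by
  classical
  obtain ⟨x0, y0, hf0, hopt0⟩ := exists_optimal R γ hγ C hC
  -- a feasible solution has, in each Bad block, an active entry strictly below capacity
  have badwit : ∀ (x : J → K → Bool) (y : J → K → ℝ), Feasible γ C x y →
      ∀ b : K, (¬ ∀ a, y a b = γ a b * (if x a b then 1 else 0)) →
      ∃ a, x a b = true ∧ y a b < γ a b := by
    intro x y hf b hb
    push_neg at hb
    obtain ⟨a, ha⟩ := hb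
    have hbnd := hf.2.1 a b
    cases hxv : x a b with
    | false =>
      exfalso
      apply ha
      rw [hxv]
      simp only [Bool.false_eq_true, if_false, mul_zero]
      refine le_antisymm ?_ hbnd.1
      have := hbnd.2
      rw [hxv] at this
      simpa using this
    | true =>
      refine ⟨a, hxv, ?_⟩
      have := hbnd.2
      rw [hxv] at this
      simp only [if_true, mul_one] at this
      rcases lt_or_eq_of_le this with h | h
      · exact h
      · exact absurd (by rw [h, hxv]; simp) ha
  have main : ∀ n (x : J → K → Bool) (y : J → K → ℝ), Feasible γ C x y →
      (Finset.univ.filter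
        (fun b => ¬ ∀ a, y a b = γ a b * (if x a b then 1 else 0))).card ≤ n →
      ∃ x2 y2, Feasible γ C x2 y2 ∧ AlmostDiscrete γ x2 y2 ∧
        (∑ a, ∑ b, y a b / R a) ≤ ∑ a, ∑ b, y2 a b / R a := by
    intro n
    induction n with
    | zero =>
      intro x y hf hcard
      refine ⟨x, y, hf, ?_, le_refl _⟩
      intro b b' hb _
      exfalso
      have hmem : b ∈ Finset.univ.filter
          (fun b => ¬ ∀ a, y a b = γ a b * (if x a b then 1 else 0)) :=
        Finset.mem_filter.mpr ⟨Finset.mem_univ _, hb⟩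
      have := Finset.card_eq_zero.mp (Nat.le_zero.mp hcard)
      rw [this] at hmem
      exact absurd hmem (Finset.notMem_empty _)
    | succ n ih =>
      intro x y hf hcard
      by_cases had : AlmostDiscrete γ x y
      · exact ⟨x, y, hf, had, le_refl _⟩
      · unfold AlmostDiscrete at had
        push_neg at had
        obtain ⟨b, b', hb0, hb0', hne⟩ := had
        have hb : ¬ ∀ a, y a b = γ a b * (if x a b then 1 else 0) := not_forall.mpr hb0
        have hb' : ¬ ∀ a, y a b' = γ a b' * (if x a b' then 1 else 0) := not_forall.mpr hb0'
        obtain ⟨j, hxj, hyj⟩ := badwit x y hf b hb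
        obtain ⟨j', hxj', hyj'⟩ := badwit x y hf b' hb'
        have hstep : ∃ x2 y2, Feasible γ C x2 y2 ∧
            (∑ a, ∑ c, y a c / R a) ≤ (∑ a, ∑ c, y2 a c / R a) ∧
            ∃ k0, (¬ ∀ a, y a k0 = γ a k0 * (if x a k0 then 1 else 0)) ∧
              ∀ c, (¬ ∀ a, y2 a c = γ a c * (if x2 a c then 1 else 0)) →
                c ≠ k0 ∧ (¬ ∀ a, y a c = γ a c * (if x a c then 1 else 0)) := by
          rcases le_total (R j) (R j') with h | h
          · exact step R hR γ C x y hf b b' hne j j' hxj hyj hxj' hyj' h hb hb'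
          · obtain ⟨x2, y2, h1, h2, k0, h3, h4⟩ :=
              step R hR γ C x y hf b' b hne.symm j' j hxj' hyj' hxj hyj h hb' hb
            exact ⟨x2, y2, h1, h2, k0, h3, h4⟩
        obtain ⟨x2, y2, hf2, hobj2, k0, hbadk0, hsub⟩ := hstep
        have hcard2 : (Finset.univ.filter
            (fun c => ¬ ∀ a, y2 a c = γ a c * (if x2 a c then 1 else 0))).card ≤ n := by
          have hsubset : (Finset.univ.filter
              (fun c => ¬ ∀ a, y2 a c = γ a c * (if x2 a c then 1 else 0))) ⊆
              (Finset.univ.filter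
                (fun c => ¬ ∀ a, y a c = γ a c * (if x a c then 1 else 0))).erase k0 := by
            intro c hc
            have hc' := (Finset.mem_filter.mp hc).2
            obtain ⟨hck0, hcold⟩ := hsub c hc'
            exact Finset.mem_erase.mpr ⟨hck0, Finset.mem_filter.mpr ⟨Finset.mem_univ _, hcold⟩⟩
          have hk0mem : k0 ∈ Finset.univ.filter
              (fun c => ¬ ∀ a, y a c = γ a c * (if x a c then 1 else 0)) :=
            Finset.mem_filter.mpr ⟨Finset.mem_univ _, hbadk0⟩
          calc (Finset.univ.filter
              (fun c => ¬ ∀ a, y2 a c = γ a c * (if x2 a c then 1 else 0))).card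
              ≤ ((Finset.univ.filter
                (fun c => ¬ ∀ a, y a c = γ a c * (if x a c then 1 else 0))).erase k0).card :=
              Finset.card_le_card hsubset
            _ = (Finset.univ.filter
                (fun c => ¬ ∀ a, y a c = γ a c * (if x a c then 1 else 0))).card - 1 :=
              Finset.card_erase_of_mem hk0mem
            _ ≤ n := by omega
        obtain ⟨x3, y3, hf3, had3, hobj3⟩ := ih x2 y2 hf2 hcard2
        exact ⟨x3, y3, hf3, had3, le_trans hobj2 hobj3⟩
  obtain ⟨x2, y2, hf2, had2, hle2⟩ := main
    (Finset.univ.filter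
      (fun b => ¬ ∀ a, y0 a b = γ a b * (if x0 a b then 1 else 0))).card x0 y0 hf0 le_rfl
  exact ⟨x2, y2, hf2, had2, fun x' y' hf' => le_trans (hopt0 x' y' hf') hle2⟩
end
end

section
/- Consider the LP relaxation: maximize Σ_{j,k} x_{jk} γ_{jk}/R_j over x ≥ 0 subject to Σ_j x_{jk} ≤ 1 for each of κ resource blocks and Σ_{jk} γ_{jk} x_{jk} ≤ C. Any basic feasible (vertex) optimal solution has the property that at most one resource block k is fractionally shared between two distinct users (i.e., has x_{j1 k}, x_{j2 k} > 0 for j1 ≠ j2), and every other resource block has at most one user j with x_{jk} > 0. -/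
variable {J K : Type*}

section
variable [Fintype J] [Fintype K]

/-- Feasible region of the LP relaxation `RLP`. -/
def RLPFeasible (γ : J → K → ℝ) (C : ℝ) (x : J → K → ℝ) : Prop :=
  (∀ j k, 0 ≤ x j k) ∧ (∀ k, (∑ j, x j k) ≤ 1) ∧ (∑ j, ∑ k, γ j k * x j k) ≤ C

/-- `x` is an extreme point (vertex / basic feasible solution) of the `RLP` polytope. -/
def RLPVertex (γ : J → K → ℝ) (C : ℝ) (x : J → K → ℝ) : Prop :=
  RLPFeasible γ C x ∧
    ∀ a b : J → K → ℝ, RLPFeasible γ C a → RLPFeasible γ C b →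
      (∀ j k, x j k = (a j k + b j k) / 2) → a = b

lemma rlp_no_two_shared
    (γ : J → K → ℝ) (C : ℝ) (x : J → K → ℝ) (hvx : RLPVertex γ C x)
    {k k' : K} (hkk : k ≠ k')
    {j1 j2 j1' j2' : J} (h12 : j1 ≠ j2) (h12' : j1' ≠ j2')
    (hx1 : 0 < x j1 k) (hx2 : 0 < x j2 k)
    (hx1' : 0 < x j1' k') (hx2' : 0 < x j2' k')
    (t s : ℝ) (hts : t ≠ 0 ∨ s ≠ 0)
    (hcap : t * (γ j1 k - γ j2 k) + s * (γ j1' k' - γ j2' k') = 0) : False := by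
  classical
  obtain ⟨⟨hxnn, hxblk, hxcap⟩, hvert⟩ := hvx
  set m : ℝ := min (min (x j1 k) (x j2 k)) (min (x j1' k') (x j2' k')) with hmdef
  have hm0 : 0 < m := lt_min (lt_min hx1 hx2) (lt_min hx1' hx2')
  set D : ℝ := |t| + |s| + 1 with hDdef
  have hD0 : 0 < D := by positivity
  set ε : ℝ := m / D with hεdef
  have hε0 : 0 < ε := div_pos hm0 hD0
  have hεD : ε * D = m := div_mul_cancel₀ m hD0.ne'
  have hεt : ε * |t| ≤ m := by nlinarith [abs_nonneg t, abs_nonneg s, hε0.le]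
  have hεs : ε * |s| ≤ m := by nlinarith [abs_nonneg t, abs_nonneg s, hε0.le]
  set d : J → K → ℝ := fun j k0 =>
    (if j = j1 ∧ k0 = k then t else 0) - (if j = j2 ∧ k0 = k then t else 0)
      + ((if j = j1' ∧ k0 = k' then s else 0) - (if j = j2' ∧ k0 = k' then s else 0))
    with hddef
  have hdsum : ∀ k0, ∑ j, d j k0 = 0 := by
    intro k0
    simp [hddef, ite_and, Finset.sum_add_distrib, Finset.sum_sub_distrib,
      Finset.sum_ite_eq']
  have hdcap : ∑ j, ∑ k0, γ j k0 * d j k0 = 0 := by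
    have : ∑ j, ∑ k0, γ j k0 * d j k0
        = γ j1 k * t - γ j2 k * t + (γ j1' k' * s - γ j2' k' * s) := by
      simp [hddef, mul_sub, mul_add, mul_ite, mul_zero, ite_and,
        Finset.sum_add_distrib, Finset.sum_sub_distrib, Finset.sum_ite_eq']
    rw [this]; linarith [hcap]
  have hmle1 : m ≤ x j1 k := le_trans (min_le_left _ _) (min_le_left _ _)
  have hmle2 : m ≤ x j2 k := le_trans (min_le_left _ _) (min_le_right _ _)
  have hmle1' : m ≤ x j1' k' := le_trans (min_le_right _ _) (min_le_left _ _)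
  have hmle2' : m ≤ x j2' k' := le_trans (min_le_right _ _) (min_le_right _ _)
  have hbd : ∀ j k0, |ε * d j k0| ≤ x j k0 := by
    intro j k0
    by_cases h1 : j = j1 ∧ k0 = k
    · obtain ⟨rfl, rfl⟩ := h1
      have hd : d j k0 = t := by simp [hddef, h12, hkk]
      rw [hd, abs_mul, abs_of_pos hε0]
      exact le_trans hεt hmle1
    · by_cases h2 : j = j2 ∧ k0 = k
      · obtain ⟨rfl, rfl⟩ := h2
        have hd : d j k0 = -t := by simp [hddef, h12.symm, hkk]
        rw [hd, abs_mul, abs_of_pos hε0, abs_neg]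
        exact le_trans hεt hmle2
      · by_cases h3 : j = j1' ∧ k0 = k'
        · obtain ⟨rfl, rfl⟩ := h3
          have hd : d j k0 = s := by simp [hddef, h12', hkk.symm]
          rw [hd, abs_mul, abs_of_pos hε0]
          exact le_trans hεs hmle1'
        · by_cases h4 : j = j2' ∧ k0 = k'
          · obtain ⟨rfl, rfl⟩ := h4
            have hd : d j k0 = -s := by simp [hddef, h12'.symm, hkk.symm]
            rw [hd, abs_mul, abs_of_pos hε0, abs_neg]
            exact le_trans hεs hmle2'
          · have hd : d j k0 = 0 := by simp [hddef, h1, h2, h3, h4]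
            rw [hd, mul_zero, abs_zero]
            exact hxnn j k0
  have hfeas : ∀ c : ℝ, |c| = 1 → RLPFeasible γ C (fun j k0 => x j k0 + c * (ε * d j k0)) := by
    intro c hc
    refine ⟨?_, ?_, ?_⟩
    · intro j k0
      have h := abs_le.mp (hbd j k0)
      have : |c * (ε * d j k0)| ≤ x j k0 := by rw [abs_mul, hc, one_mul]; exact hbd j k0
      have h2 := (abs_le.mp this).1
      dsimp only
      linarith
    · intro k0
      have : ∑ j, (x j k0 + c * (ε * d j k0))
          = (∑ j, x j k0) + c * ε * ∑ j, d j k0 := by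
        rw [Finset.sum_add_distrib, Finset.mul_sum]
        congr 1
        apply Finset.sum_congr rfl
        intro j _; ring
      rw [this, hdsum, mul_zero, add_zero]
      exact hxblk k0
    · have : ∑ j, ∑ k0, γ j k0 * (x j k0 + c * (ε * d j k0))
          = (∑ j, ∑ k0, γ j k0 * x j k0) + c * ε * ∑ j, ∑ k0, γ j k0 * d j k0 := by
        rw [Finset.mul_sum, ← Finset.sum_add_distrib]
        apply Finset.sum_congr rfl
        intro j _
        rw [Finset.mul_sum, ← Finset.sum_add_distrib]
        apply Finset.sum_congr rfl
        intro k0 _; ring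
      rw [this, hdcap, mul_zero, add_zero]
      exact hxcap
  have hfa := hfeas 1 (by norm_num)
  have hfb := hfeas (-1) (by norm_num)
  have heq := hvert _ _ hfa hfb (fun j k0 => by ring)
  have hzero : ∀ j k0, ε * d j k0 = 0 := by
    intro j k0
    have := congrFun (congrFun heq j) k0
    simp only [add_right_inj] at this
    linarith
  have ht0 : t = 0 := by
    have := hzero j1 k
    have hd : d j1 k = t := by simp [hddef, h12, hkk]
    rw [hd] at this
    exact (mul_eq_zero.mp this).resolve_left hε0.ne'
  have hs0 : s = 0 := by
    have := hzero j1' k'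
    have hd : d j1' k' = s := by simp [hddef, h12', hkk.symm]
    rw [hd] at this
    exact (mul_eq_zero.mp this).resolve_left hε0.ne'
  rcases hts with h | h
  · exact h ht0
  · exact h hs0


/-- In a vertex optimal solution of the LP relaxation, at most one resource block
is fractionally shared between two distinct users; every other block has at most
one user with positive allocation. -/
theorem rlp_vertex_at_most_one_shared
    (R : J → ℝ) (hR : ∀ j, 0 < R j)
    (γ : J → K → ℝ) (hγ : ∀ j k, 0 < γ j k)
    (C : ℝ) (hC : 0 < C)
    (x : J → K → ℝ) (hvx : RLPVertex γ C x)
    (hopt : ∀ x', RLPFeasible γ C x' →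
      (∑ j, ∑ k, x' j k * γ j k / R j) ≤ ∑ j, ∑ k, x j k * γ j k / R j) :
    ∀ k k' : K,
      (∃ j1 j2 : J, j1 ≠ j2 ∧ 0 < x j1 k ∧ 0 < x j2 k) →
      (∃ j1 j2 : J, j1 ≠ j2 ∧ 0 < x j1 k' ∧ 0 < x j2 k') → k = k' := by
  intro k k' hk hk'
  by_contra hkk
  obtain ⟨j1, j2, h12, hx1, hx2⟩ := hk
  obtain ⟨j1', j2', h12', hx1', hx2'⟩ := hk'
  by_cases hA : γ j1 k - γ j2 k = 0
  · exact rlp_no_two_shared γ C x hvx hkk h12 h12' hx1 hx2 hx1' hx2' 1 0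
      (Or.inl one_ne_zero) (by rw [hA]; ring)
  · exact rlp_no_two_shared γ C x hvx hkk h12 h12' hx1 hx2 hx1' hx2'
      (γ j1' k' - γ j2' k') (-(γ j1 k - γ j2 k))
      (Or.inr (neg_ne_zero.mpr hA)) (by ring)
end
end

section
/- The set function f(S), defined as the optimal value of the rate-allocation LP over the triples in S (with per-RU capacities C_i and total capacity C), is submodular: for all S and elements j, k ∉ S with j ≠ k, f(S ∪ {j}) + f(S ∪ {k}) ≥ f(S ∪ {j, k}) + f(S). -/
variable {ι υ κ : Type*}

section
variable [Fintype ι] [Fintype υ] [Fintype κ] [DecidableEq ι] [DecidableEq υ] [DecidableEq κ]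

/-- `fval R γ Ci C S` is the optimal value of the rate-allocation LP over the set `S`
of RU-user-RB triples: maximize `Σ_{t ∈ S} y t / R_{ij}` subject to `0 ≤ y t ≤ γ t`,
the per-RU capacities `C_i`, and the total capacity `C`. -/
noncomputable def fval (R : ι → υ → ℝ) (γ : ι × υ × κ → ℝ) (Ci : ι → ℝ) (C : ℝ)
    (S : Finset (ι × υ × κ)) : ℝ :=
  sSup {v : ℝ | ∃ y : ι × υ × κ → ℝ,
    (∀ t ∈ S, 0 ≤ y t ∧ y t ≤ γ t) ∧
    (∀ i : ι, (∑ t ∈ S.filter (fun t => t.1 = i), y t) ≤ Ci i) ∧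
    (∑ t ∈ S, y t) ≤ C ∧
    v = ∑ t ∈ S, y t / R t.1 t.2.1}

open Finset

/-- If a target `s` lies between the sum of lower bounds and the sum of upper bounds,
there is a vector within the bounds summing exactly to `s`. -/
lemma exists_sum_eq_aux {T : Type*} (F : Finset T) (L U : T → ℝ) :
    ∀ s : ℝ, (∀ t ∈ F, L t ≤ U t) → (∑ t ∈ F, L t) ≤ s → s ≤ ∑ t ∈ F, U t →
      ∃ a : T → ℝ, (∀ t ∈ F, L t ≤ a t ∧ a t ≤ U t) ∧ ∑ t ∈ F, a t = s := by
  classical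
  induction F using Finset.induction_on with
  | empty =>
    intro s _ h1 h2
    refine ⟨0, by simp, ?_⟩
    simp only [sum_empty] at h1 h2 ⊢
    linarith
  | @insert t F ht ih =>
    intro s hLU h1 h2
    rw [sum_insert ht] at h1 h2
    set x := min (U t) (s - ∑ u ∈ F, L u) with hx
    have hLF : ∑ u ∈ F, L u ≤ ∑ u ∈ F, U u :=
      sum_le_sum fun u hu => hLU u (mem_insert_of_mem hu)
    have hLx : L t ≤ x := le_min (hLU t (mem_insert_self _ _)) (by linarith)
    have hxU : x ≤ U t := min_le_left _ _
    have hxs : x ≤ s - ∑ u ∈ F, L u := min_le_right _ _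
    have h2' : s - x ≤ ∑ u ∈ F, U u := by
      rcases min_cases (U t) (s - ∑ u ∈ F, L u) with ⟨h, _⟩ | ⟨h, _⟩ <;> rw [← hx] at h <;> linarith
    obtain ⟨a, ha, hsum⟩ := ih (s - x) (fun u hu => hLU u (mem_insert_of_mem hu))
      (by linarith) h2'
    refine ⟨fun u => if u = t then x else a u, ?_, ?_⟩
    · intro u hu
      rcases mem_insert.mp hu with rfl | hu'
      · simp [hLx, hxU]
      · have : u ≠ t := fun h => ht (h ▸ hu')
        simpa [this] using ha u hu'
    · rw [sum_insert ht]
      simp only [if_pos rfl]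
      have : ∑ u ∈ F, (if u = t then x else a u) = ∑ u ∈ F, a u :=
        sum_congr rfl fun u hu => if_neg (by rintro rfl; exact ht hu)
      rw [this, hsum]; simp

/-- The feasible-value set of the LP. -/
def Vset (R : ι → υ → ℝ) (γ : ι × υ × κ → ℝ) (Ci : ι → ℝ) (C : ℝ)
    (S : Finset (ι × υ × κ)) : Set ℝ :=
  {v : ℝ | ∃ y : ι × υ × κ → ℝ,
    (∀ t ∈ S, 0 ≤ y t ∧ y t ≤ γ t) ∧
    (∀ i : ι, (∑ t ∈ S.filter (fun t => t.1 = i), y t) ≤ Ci i) ∧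
    (∑ t ∈ S, y t) ≤ C ∧
    v = ∑ t ∈ S, y t / R t.1 t.2.1}

lemma fval_eq_sSup (R : ι → υ → ℝ) (γ : ι × υ × κ → ℝ) (Ci : ι → ℝ) (C : ℝ)
    (S : Finset (ι × υ × κ)) : fval R γ Ci C S = sSup (Vset R γ Ci C S) := rfl

lemma Vset_zero_mem (R : ι → υ → ℝ) (γ : ι × υ × κ → ℝ) (hγ : ∀ t, 0 ≤ γ t)
    (Ci : ι → ℝ) (hCi : ∀ i, 0 ≤ Ci i) (C : ℝ) (hC : 0 ≤ C) (S : Finset (ι × υ × κ)) :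
    (0 : ℝ) ∈ Vset R γ Ci C S :=
  ⟨fun _ => 0, fun t _ => ⟨le_rfl, hγ t⟩, fun i => by simpa using hCi i, by simpa using hC,
    by simp⟩

lemma Vset_bddAbove (R : ι → υ → ℝ) (hR : ∀ i j, 0 < R i j) (γ : ι × υ × κ → ℝ)
    (Ci : ι → ℝ) (C : ℝ) (S : Finset (ι × υ × κ)) :
    BddAbove (Vset R γ Ci C S) := by
  refine ⟨∑ t ∈ S, γ t / R t.1 t.2.1, ?_⟩
  rintro v ⟨y, hbox, -, -, rfl⟩
  exact sum_le_sum fun t ht => (div_le_div_iff_of_pos_right (hR _ _)).mpr (hbox t ht).2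

lemma le_fval (R : ι → υ → ℝ) (hR : ∀ i j, 0 < R i j) (γ : ι × υ × κ → ℝ)
    (Ci : ι → ℝ) (C : ℝ) (S : Finset (ι × υ × κ)) {v : ℝ} (hv : v ∈ Vset R γ Ci C S) :
    v ≤ fval R γ Ci C S :=
  le_csSup (Vset_bddAbove R hR γ Ci C S) hv

/-- Key exchange lemma: a feasible solution on `S ∪ {e₁, e₂}` and one on `S`
can be recombined into feasible solutions on `S ∪ {e₁}` and `S ∪ {e₂}`
with the same total value. -/
lemma key_exchange (R : ι → υ → ℝ) (γ : ι × υ × κ → ℝ) (hγ : ∀ t, 0 ≤ γ t)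
    (Ci : ι → ℝ) (C : ℝ)
    (S : Finset (ι × υ × κ)) (e₁ e₂ : ι × υ × κ) (he₁ : e₁ ∉ S) (he₂ : e₂ ∉ S) (hne : e₁ ≠ e₂)
    (y z : ι × υ × κ → ℝ)
    (hyb : ∀ t ∈ insert e₂ (insert e₁ S), 0 ≤ y t ∧ y t ≤ γ t)
    (hyf : ∀ i : ι, (∑ t ∈ (insert e₂ (insert e₁ S)).filter (fun t => t.1 = i), y t) ≤ Ci i)
    (hyt : (∑ t ∈ insert e₂ (insert e₁ S), y t) ≤ C)
    (hzb : ∀ t ∈ S, 0 ≤ z t ∧ z t ≤ γ t)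
    (hzf : ∀ i : ι, (∑ t ∈ S.filter (fun t => t.1 = i), z t) ≤ Ci i)
    (hzt : (∑ t ∈ S, z t) ≤ C) :
    ∃ y₁ y₂ : ι × υ × κ → ℝ,
      ((∀ t ∈ insert e₁ S, 0 ≤ y₁ t ∧ y₁ t ≤ γ t) ∧
       (∀ i : ι, (∑ t ∈ (insert e₁ S).filter (fun t => t.1 = i), y₁ t) ≤ Ci i) ∧
       (∑ t ∈ insert e₁ S, y₁ t) ≤ C) ∧
      ((∀ t ∈ insert e₂ S, 0 ≤ y₂ t ∧ y₂ t ≤ γ t) ∧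
       (∀ i : ι, (∑ t ∈ (insert e₂ S).filter (fun t => t.1 = i), y₂ t) ≤ Ci i) ∧
       (∑ t ∈ insert e₂ S, y₂ t) ≤ C) ∧
      (∑ t ∈ insert e₁ S, y₁ t / R t.1 t.2.1) + (∑ t ∈ insert e₂ S, y₂ t / R t.1 t.2.1) =
        (∑ t ∈ insert e₂ (insert e₁ S), y t / R t.1 t.2.1) + (∑ t ∈ S, z t / R t.1 t.2.1) := by
  classical
  have hne' : e₂ ≠ e₁ := hne.symm
  have he₁B : e₁ ∈ insert e₂ (insert e₁ S) := by simp
  have he₂B : e₂ ∈ insert e₂ (insert e₁ S) := by simp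
  have he₂1 : e₂ ∉ insert e₁ S := by simp [hne', he₂]
  -- expansion of sums over the big set
  have sumB : ∀ f : ι × υ × κ → ℝ,
      ∑ t ∈ insert e₂ (insert e₁ S), f t = f e₂ + f e₁ + ∑ t ∈ S, f t := by
    intro f
    rw [sum_insert he₂1, sum_insert he₁]; ring
  -- expansion of filtered sums over the big set
  have sumfiltB : ∀ (f : ι × υ × κ → ℝ) (i : ι),
      ∑ t ∈ (insert e₂ (insert e₁ S)).filter (fun t => t.1 = i), f t
        = (if e₂.1 = i then f e₂ else 0) + (if e₁.1 = i then f e₁ else 0)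
            + ∑ t ∈ S.filter (fun t => t.1 = i), f t := by
    intro f i
    have h1 : e₁ ∉ S.filter (fun t => t.1 = i) := fun h => he₁ (mem_of_mem_filter _ h)
    have h2 : e₂ ∉ S.filter (fun t => t.1 = i) := fun h => he₂ (mem_of_mem_filter _ h)
    have h3 : e₂ ∉ insert e₁ (S.filter (fun t => t.1 = i)) := by
      simp [hne', h2]
    rw [filter_insert, filter_insert]
    split_ifs with hb2 hb1 hb1
    · rw [sum_insert h3, sum_insert h1]; ring
    · rw [sum_insert h2]; ring
    · rw [sum_insert h1]; ring
    · ring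
  have hyS : ∀ t ∈ S, 0 ≤ y t ∧ y t ≤ γ t := fun t ht => hyb t (by simp [ht])
  have hy1 : 0 ≤ y e₁ ∧ y e₁ ≤ γ e₁ := hyb e₁ he₁B
  have hy2 : 0 ≤ y e₂ ∧ y e₂ ≤ γ e₂ := hyb e₂ he₂B
  -- lower and upper bounds for the split on S
  set L : ι × υ × κ → ℝ := fun t => max 0 (y t + z t - γ t) with hLdef
  set U : ι × υ × κ → ℝ := fun t => min (γ t) (y t + z t) with hUdef
  have hL0 : ∀ t, 0 ≤ L t := fun t => le_max_left _ _
  have hLy : ∀ t ∈ S, L t ≤ y t := by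
    intro t ht
    obtain ⟨h1, h2⟩ := hyS t ht; obtain ⟨h3, h4⟩ := hzb t ht
    exact max_le h1 (by linarith)
  have hLz : ∀ t ∈ S, L t ≤ z t := by
    intro t ht
    obtain ⟨h1, h2⟩ := hyS t ht; obtain ⟨h3, h4⟩ := hzb t ht
    exact max_le h3 (by linarith)
  have hLU : ∀ t ∈ S, L t ≤ U t := by
    intro t ht
    obtain ⟨h1, h2⟩ := hyS t ht; obtain ⟨h3, h4⟩ := hzb t ht
    exact max_le (le_min (hγ t) (by linarith)) (le_min (by linarith) (by linarith))
  have hUγ : ∀ t, U t ≤ γ t := fun t => min_le_left _ _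
  have hUw : ∀ t ∈ S, U t = y t + z t - L t := by
    intro t ht
    simp only [hLdef, hUdef, max_def, min_def]
    split_ifs <;> linarith
  -- fiberwise quantities
  set Yf : ι → ℝ := fun i => ∑ t ∈ S.filter (fun t => t.1 = i), y t with hYfdef
  set Zf : ι → ℝ := fun i => ∑ t ∈ S.filter (fun t => t.1 = i), z t with hZfdef
  set Lf : ι → ℝ := fun i => ∑ t ∈ S.filter (fun t => t.1 = i), L t with hLfdef
  set Uf : ι → ℝ := fun i => ∑ t ∈ S.filter (fun t => t.1 = i), U t with hUfdef
  set α : ι → ℝ := fun i => if e₁.1 = i then y e₁ else 0 with hαdef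
  set β : ι → ℝ := fun i => if e₂.1 = i then y e₂ else 0 with hβdef
  have hα0 : ∀ i, 0 ≤ α i := by
    intro i; simp only [hαdef]; split_ifs; exacts [hy1.1, le_rfl]
  have hβ0 : ∀ i, 0 ≤ β i := by
    intro i; simp only [hβdef]; split_ifs; exacts [hy2.1, le_rfl]
  have hyfib : ∀ i, Yf i + α i + β i ≤ Ci i := by
    intro i
    have := hyf i
    rw [sumfiltB y i] at this
    simp only [hYfdef, hαdef, hβdef]
    linarith
  have hzfib : ∀ i, Zf i ≤ Ci i := hzf
  have hLfY : ∀ i, Lf i ≤ Yf i := fun i =>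
    sum_le_sum fun t ht => hLy t (mem_of_mem_filter _ ht)
  have hLfZ : ∀ i, Lf i ≤ Zf i := fun i =>
    sum_le_sum fun t ht => hLz t (mem_of_mem_filter _ ht)
  have hUf : ∀ i, Uf i = Yf i + Zf i - Lf i := by
    intro i
    have h : ∑ t ∈ S.filter (fun t => t.1 = i), U t
        = ∑ t ∈ S.filter (fun t => t.1 = i), (y t + z t - L t) :=
      sum_congr rfl fun t ht => hUw t (mem_of_mem_filter _ ht)
    simp only [hUfdef, hYfdef, hZfdef, hLfdef]
    rw [h, sum_sub_distrib, sum_add_distrib]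
  -- fiberwise bounds for the split
  set lo : ι → ℝ := fun i => max (Lf i) (Yf i + Zf i - (Ci i - β i)) with hlodef
  set hi : ι → ℝ := fun i => min (Ci i - α i) (Uf i) with hhidef
  have hlohi : ∀ i, lo i ≤ hi i := by
    intro i
    have h1 := hLfY i; have h2 := hLfZ i; have h3 := hyfib i; have h4 := hzfib i
    have h5 := hUf i; have h6 := hα0 i; have h7 := hβ0 i
    refine max_le (le_min ?_ ?_) (le_min ?_ ?_) <;> linarith
  have hloY : ∀ i, lo i ≤ Yf i + β i := by
    intro i
    have h1 := hLfY i; have h4 := hzfib i; have h7 := hβ0 i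
    exact max_le (by linarith) (by linarith)
  have hhiY : ∀ i, Yf i + Zf i - hi i ≤ Yf i + α i := by
    intro i
    have h1 := hLfY i; have h4 := hzfib i; have h5 := hUf i; have h6 := hα0 i
    have : Zf i - α i ≤ hi i := le_min (by linarith) (by linarith)
    linarith
  have hLflo : ∀ i, Lf i ≤ lo i := fun i => le_max_left _ _
  have hloCi : ∀ i, Yf i + Zf i - (Ci i - β i) ≤ lo i := fun i => le_max_right _ _
  have hhiCi : ∀ i, hi i ≤ Ci i - α i := fun i => min_le_left _ _
  have hhiUf : ∀ i, hi i ≤ Uf i := fun i => min_le_right _ _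
  -- global sums
  have hytot : y e₂ + y e₁ + ∑ t ∈ S, y t ≤ C := by rw [← sumB y]; exact hyt
  have hYs : ∑ i, Yf i = ∑ t ∈ S, y t := by
    simp only [hYfdef]; exact sum_fiberwise S (fun t => t.1) y
  have hZs : ∑ i, Zf i = ∑ t ∈ S, z t := by
    simp only [hZfdef]; exact sum_fiberwise S (fun t => t.1) z
  have hαs : ∑ i, α i = y e₁ := by simp [hαdef]
  have hβs : ∑ i, β i = y e₂ := by simp [hβdef]
  -- choose global target M
  set M : ℝ := max (∑ i, lo i) ((∑ t ∈ S, y t) + (∑ t ∈ S, z t) - (C - y e₂)) with hMdef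
  have hloM : ∑ i, lo i ≤ M := le_max_left _ _
  have hM2 : (∑ t ∈ S, y t) + (∑ t ∈ S, z t) - (C - y e₂) ≤ M := le_max_right _ _
  have hMhi : M ≤ ∑ i, hi i := by
    refine max_le (sum_le_sum fun i _ => hlohi i) ?_
    have t1 : ∑ i, (Yf i + Zf i - hi i) ≤ ∑ i, (Yf i + α i) := sum_le_sum fun i _ => hhiY i
    rw [sum_sub_distrib, sum_add_distrib, sum_add_distrib] at t1
    rw [hYs, hZs, hαs] at t1
    linarith
  have hMC1 : M ≤ C - y e₁ := by
    refine max_le ?_ (by linarith)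
    have t1 : ∑ i, lo i ≤ ∑ i, (Yf i + β i) := sum_le_sum fun i _ => hloY i
    rw [sum_add_distrib, hYs, hβs] at t1
    linarith
  -- choose fiber targets
  obtain ⟨s, hs1, hs2⟩ := exists_sum_eq_aux (univ : Finset ι) lo hi M
    (fun i _ => hlohi i) hloM hMhi
  have hslo : ∀ i, lo i ≤ s i := fun i => (hs1 i (mem_univ i)).1
  have hshi : ∀ i, s i ≤ hi i := fun i => (hs1 i (mem_univ i)).2
  -- choose the split within each fiber
  have hfib_ex : ∀ i : ι, ∃ a : ι × υ × κ → ℝ,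
      (∀ t ∈ S.filter (fun t => t.1 = i), L t ≤ a t ∧ a t ≤ U t) ∧
      (∑ t ∈ S.filter (fun t => t.1 = i), a t) = s i := by
    intro i
    refine exists_sum_eq_aux _ L U (s i) (fun t ht => hLU t (mem_of_mem_filter _ ht)) ?_ ?_
    · exact le_trans (hLflo i) (hslo i)
    · exact le_trans (hshi i) (hhiUf i)
  choose A hA1 hA2 using hfib_ex
  set a : ι × υ × κ → ℝ := fun t => A t.1 t with hadef
  have hmemf : ∀ t ∈ S, t ∈ S.filter (fun u => u.1 = t.1) := fun t ht =>
    mem_filter.mpr ⟨ht, rfl⟩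
  have haL : ∀ t ∈ S, L t ≤ a t ∧ a t ≤ U t := fun t ht => hA1 t.1 t (hmemf t ht)
  have hafib : ∀ i, ∑ t ∈ S.filter (fun t => t.1 = i), a t = s i := by
    intro i
    rw [← hA2 i]
    refine sum_congr rfl fun t ht => ?_
    have h : t.1 = i := (mem_filter.mp ht).2
    simp only [hadef]
    rw [h]
  have haS : ∑ t ∈ S, a t = M := by
    rw [← sum_fiberwise S (fun t => t.1) a]
    simp only [hafib]
    exact hs2
  -- define the two solutions
  refine ⟨fun t => if t = e₁ then y e₁ else a t,
          fun t => if t = e₂ then y e₂ else y t + z t - a t, ⟨?_, ?_, ?_⟩, ⟨?_, ?_, ?_⟩, ?_⟩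
  · -- box constraints for y₁
    intro t ht
    rcases mem_insert.mp ht with rfl | htS
    · simpa using hy1
    · have hnt : t ≠ e₁ := by rintro rfl; exact he₁ htS
      obtain ⟨hb1, hb2⟩ := haL t htS
      simp only [if_neg hnt]
      exact ⟨le_trans (hL0 t) hb1, le_trans hb2 (hUγ t)⟩
  · -- fiber constraints for y₁
    intro i
    have hfa : ∑ t ∈ S.filter (fun t => t.1 = i), (if t = e₁ then y e₁ else a t)
        = ∑ t ∈ S.filter (fun t => t.1 = i), a t := by
      refine sum_congr rfl fun t ht => if_neg ?_
      rintro rfl; exact he₁ (mem_of_mem_filter _ ht)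
    rw [filter_insert]
    split_ifs with hb
    · have h1 : e₁ ∉ S.filter (fun t => t.1 = i) := fun h => he₁ (mem_of_mem_filter _ h)
      rw [sum_insert h1, hfa, hafib i]
      have hs := le_trans (hshi i) (hhiCi i)
      have hα : α i = y e₁ := by simp [hαdef, hb]
      have hid : (if e₁ = e₁ then y e₁ else a e₁) = y e₁ := if_pos rfl
      beta_reduce
      rw [hid]
      rw [hα] at hs
      linarith
    · rw [hfa, hafib i]
      have h := le_trans (hshi i) (hhiCi i)
      have hα : α i = 0 := by simp [hαdef, hb]
      rw [hα] at h
      linarith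
  · -- total constraint for y₁
    rw [sum_insert he₁]
    have hfa : ∑ t ∈ S, (if t = e₁ then y e₁ else a t) = ∑ t ∈ S, a t := by
      refine sum_congr rfl fun t ht => if_neg ?_
      rintro rfl; exact he₁ ht
    rw [hfa, haS]
    have hid : (if e₁ = e₁ then y e₁ else a e₁) = y e₁ := if_pos rfl
    beta_reduce
    rw [hid]
    linarith
  · -- box constraints for y₂
    intro t ht
    rcases mem_insert.mp ht with rfl | htS
    · simpa using hy2
    · have hnt : t ≠ e₂ := by rintro rfl; exact he₂ htS
      obtain ⟨hb1, hb2⟩ := haL t htS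
      have hu := hUw t htS
      have h0 := hL0 t
      simp only [if_neg hnt]
      constructor
      · linarith
      · have := le_max_right (0:ℝ) (y t + z t - γ t)
        have hLt : y t + z t - γ t ≤ L t := this
        linarith
  · -- fiber constraints for y₂
    intro i
    have hfa : ∑ t ∈ S.filter (fun t => t.1 = i), (if t = e₂ then y e₂ else y t + z t - a t)
        = Yf i + Zf i - s i := by
      have : ∑ t ∈ S.filter (fun t => t.1 = i), (if t = e₂ then y e₂ else y t + z t - a t)
          = ∑ t ∈ S.filter (fun t => t.1 = i), (y t + z t - a t) := by
        refine sum_congr rfl fun t ht => if_neg ?_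
        rintro rfl; exact he₂ (mem_of_mem_filter _ ht)
      rw [this, sum_sub_distrib, sum_add_distrib, hafib i]
    rw [filter_insert]
    split_ifs with hb
    · have h2 : e₂ ∉ S.filter (fun t => t.1 = i) := fun h => he₂ (mem_of_mem_filter _ h)
      rw [sum_insert h2, hfa]
      have hβe : β i = y e₂ := by simp [hβdef, hb]
      have hs := le_trans (hloCi i) (hslo i)
      have hid : (if e₂ = e₂ then y e₂ else y e₂ + z e₂ - a e₂) = y e₂ := if_pos rfl
      beta_reduce
      rw [hid]
      rw [hβe] at hs
      linarith
    · rw [hfa]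
      have hβe : β i = 0 := by simp [hβdef, hb]
      have h := le_trans (hloCi i) (hslo i)
      rw [hβe] at h
      linarith
  · -- total constraint for y₂
    rw [sum_insert he₂]
    have hfa : ∑ t ∈ S, (if t = e₂ then y e₂ else y t + z t - a t)
        = (∑ t ∈ S, y t) + (∑ t ∈ S, z t) - M := by
      have : ∑ t ∈ S, (if t = e₂ then y e₂ else y t + z t - a t)
          = ∑ t ∈ S, (y t + z t - a t) := by
        refine sum_congr rfl fun t ht => if_neg ?_
        rintro rfl; exact he₂ ht
      rw [this, sum_sub_distrib, sum_add_distrib, haS]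
    rw [hfa]
    have hid : (if e₂ = e₂ then y e₂ else y e₂ + z e₂ - a e₂) = y e₂ := if_pos rfl
    beta_reduce
    rw [hid]
    linarith
  · -- value equality
    rw [sum_insert he₁, sum_insert he₂, sumB (fun t => y t / R t.1 t.2.1)]
    have hfa1 : ∑ t ∈ S, (if t = e₁ then y e₁ else a t) / R t.1 t.2.1
        = ∑ t ∈ S, a t / R t.1 t.2.1 := by
      refine sum_congr rfl fun t ht => ?_
      rw [if_neg (by rintro rfl; exact he₁ ht)]
    have hfa2 : ∑ t ∈ S, (if t = e₂ then y e₂ else y t + z t - a t) / R t.1 t.2.1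
        = ∑ t ∈ S, (y t + z t - a t) / R t.1 t.2.1 := by
      refine sum_congr rfl fun t ht => ?_
      rw [if_neg (by rintro rfl; exact he₂ ht)]
    have hid1 : (if e₁ = e₁ then y e₁ else a e₁) = y e₁ := if_pos rfl
    have hid2 : (if e₂ = e₂ then y e₂ else y e₂ + z e₂ - a e₂) = y e₂ := if_pos rfl
    beta_reduce
    rw [hfa1, hfa2, hid1, hid2]
    have hsum : (∑ t ∈ S, a t / R t.1 t.2.1) + ∑ t ∈ S, (y t + z t - a t) / R t.1 t.2.1
        = (∑ t ∈ S, y t / R t.1 t.2.1) + ∑ t ∈ S, z t / R t.1 t.2.1 := by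
      rw [← sum_add_distrib, ← sum_add_distrib]
      refine sum_congr rfl fun t ht => ?_
      ring
    linarith [hsum]

/-- The set function `f` is submodular:
`f(S ∪ {e₁}) + f(S ∪ {e₂}) ≥ f(S ∪ {e₁, e₂}) + f(S)` for distinct `e₁, e₂ ∉ S`. -/
theorem fval_submodular
    (R : ι → υ → ℝ) (hR : ∀ i j, 0 < R i j)
    (γ : ι × υ × κ → ℝ) (hγ : ∀ t, 0 ≤ γ t)
    (Ci : ι → ℝ) (hCi : ∀ i, 0 ≤ Ci i) (C : ℝ) (hC : 0 ≤ C) :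
    ∀ (S : Finset (ι × υ × κ)) (e₁ e₂ : ι × υ × κ), e₁ ∉ S → e₂ ∉ S → e₁ ≠ e₂ →
      fval R γ Ci C (insert e₂ (insert e₁ S)) + fval R γ Ci C S ≤
        fval R γ Ci C (insert e₁ S) + fval R γ Ci C (insert e₂ S) := by
  intro S e₁ e₂ he₁ he₂ hne
  have key : ∀ v₁ ∈ Vset R γ Ci C (insert e₂ (insert e₁ S)), ∀ v₂ ∈ Vset R γ Ci C S,
      v₁ + v₂ ≤ fval R γ Ci C (insert e₁ S) + fval R γ Ci C (insert e₂ S) := by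
    rintro v₁ ⟨y, hyb, hyf, hyt, rfl⟩ v₂ ⟨z, hzb, hzf, hzt, rfl⟩
    obtain ⟨y₁, y₂, h₁, h₂, hval⟩ :=
      key_exchange R γ hγ Ci C S e₁ e₂ he₁ he₂ hne y z hyb hyf hyt hzb hzf hzt
    have m₁ : (∑ t ∈ insert e₁ S, y₁ t / R t.1 t.2.1) ∈ Vset R γ Ci C (insert e₁ S) :=
      ⟨y₁, h₁.1, h₁.2.1, h₁.2.2, rfl⟩
    have m₂ : (∑ t ∈ insert e₂ S, y₂ t / R t.1 t.2.1) ∈ Vset R γ Ci C (insert e₂ S) :=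
      ⟨y₂, h₂.1, h₂.2.1, h₂.2.2, rfl⟩
    have l₁ := le_fval R hR γ Ci C (insert e₁ S) m₁
    have l₂ := le_fval R hR γ Ci C (insert e₂ S) m₂
    linarith
  have hne₀ : ∀ T : Finset (ι × υ × κ), (Vset R γ Ci C T).Nonempty := fun T =>
    ⟨0, Vset_zero_mem R γ hγ Ci hCi C hC T⟩
  rw [fval_eq_sSup R γ Ci C (insert e₂ (insert e₁ S)), fval_eq_sSup R γ Ci C S]
  have h1 : sSup (Vset R γ Ci C (insert e₂ (insert e₁ S)))
      ≤ fval R γ Ci C (insert e₁ S) + fval R γ Ci C (insert e₂ S)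
        - sSup (Vset R γ Ci C S) := by
    refine csSup_le (hne₀ _) fun v₁ hv₁ => ?_
    have h2 : sSup (Vset R γ Ci C S)
        ≤ fval R γ Ci C (insert e₁ S) + fval R γ Ci C (insert e₂ S) - v₁ :=
      csSup_le (hne₀ _) fun v₂ hv₂ => by linarith [key v₁ hv₁ v₂ hv₂]
    linarith
  linarith
end
end

section
/- Let (E, 𝓘) be a matroid and f : 2^E → ℝ a monotone nondecreasing submodular function with f(∅) = 0. The greedy algorithm — repeatedly augmenting the current independent set S by a single element e with S ∪ {e} ∈ 𝓘 maximizing f(S ∪ {e}), stopping when no augmentation increases f — produces a set A with 2·f(A) ≥ f(B) for every B ∈ 𝓘; in particular, f(A) ≥ (1/2)·max_{B ∈ 𝓘} f(B). -/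
set_option linter.unusedSectionVars false
set_option linter.unusedVariables false


variable {E : Type*}

section
variable [Fintype E] [DecidableEq E]

private lemma take_toFinset_mono (l : List E) {i j : ℕ} (h : i ≤ j) :
    (l.take i).toFinset ⊆ (l.take j).toFinset := by
  intro x hx
  simp only [List.mem_toFinset] at *
  have : l.take i = (l.take j).take i := by rw [List.take_take, min_eq_left h]
  rw [this] at hx
  exact List.take_subset _ _ hx

private lemma take_toFinset_card (l : List E) (h : l.Nodup) (n : ℕ) :
    (l.take n).toFinset.card = min n l.length := by
  rw [List.toFinset_card_of_nodup (h.sublist (List.take_sublist n l))]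
  exact List.length_take

private lemma take_toFinset_succ (l : List E) {j : ℕ} (hj : j < l.length) :
    (l.take (j+1)).toFinset = insert (l.get ⟨j, hj⟩) (l.take j).toFinset := by
  ext x
  simp only [List.take_succ, List.toFinset_append, Finset.mem_union, List.mem_toFinset,
    Finset.mem_insert, List.getElem?_eq_getElem hj, Option.toList_some, List.mem_singleton,
    List.get_eq_getElem]
  tauto

private lemma get_not_mem_take (l : List E) (h : l.Nodup) {j : ℕ} (hj : j < l.length) :
    l.get ⟨j, hj⟩ ∉ (l.take j).toFinset := by
  intro hmem
  have h1 : (l.take (j+1)).toFinset = (l.take j).toFinset := by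
    rw [take_toFinset_succ l hj, Finset.insert_eq_self.2 hmem]
  have h2 := take_toFinset_card l h (j+1)
  rw [h1, take_toFinset_card l h j] at h2
  omega

private lemma union_marg (f : Finset E → ℝ)
    (hmono : ∀ S T : Finset E, S ⊆ T → f S ≤ f T)
    (hsub : ∀ S T : Finset E, S ⊆ T → ∀ e, e ∉ T →
      f (insert e T) - f T ≤ f (insert e S) - f S)
    (A : Finset E) (S : Finset E) :
    f (A ∪ S) ≤ f A + ∑ b ∈ S, (f (insert b A) - f A) := by
  classical
  induction S using Finset.induction_on with
  | empty => simp
  | @insert e S he ih =>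
    rw [Finset.sum_insert he, Finset.union_insert]
    by_cases hm : e ∈ A ∪ S
    · rw [Finset.insert_eq_self.2 hm]
      have : f A ≤ f (insert e A) := hmono _ _ (Finset.subset_insert _ _)
      linarith
    · have := hsub A (A ∪ S) Finset.subset_union_left e hm
      linarith

private lemma abel_id (ρ : ℕ → ℝ) (m : ℕ) :
    ∑ j ∈ Finset.range (m+1), ρ j
      = ((m:ℝ)+1) * ρ m + ∑ j ∈ Finset.range m, ((j:ℝ)+1) * (ρ j - ρ (j+1)) := by
  induction m with
  | zero => simp
  | succ n ih =>
    rw [Finset.sum_range_succ, ih, Finset.sum_range_succ]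
    push_cast; ring

private lemma charge_sum_le {β : Type*} [DecidableEq β] (ρ : ℕ → ℝ) (k : ℕ)
    (hpos : ∀ j, j < k → 0 ≤ ρ j)
    (hanti : ∀ j, j + 1 < k → ρ (j+1) ≤ ρ j)
    (S : Finset β) (ι : β → ℕ)
    (hlt : ∀ b ∈ S, ι b < k)
    (hcount : ∀ i ≤ k, (S.filter (fun b => ι b < i)).card ≤ i) :
    ∑ b ∈ S, ρ (ι b) ≤ ∑ j ∈ Finset.range k, ρ j := by
  classical
  match k with
  | 0 =>
    have : S = ∅ := Finset.eq_empty_of_forall_notMem (fun b hb => by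
      have := hlt b hb; omega)
    simp [this]
  | (m+1) =>
    have key : ∀ b ∈ S, ρ (ι b) = ρ m +
        ∑ j ∈ Finset.range m, (if ι b ≤ j then ρ j - ρ (j+1) else 0) := by
      intro b hb
      have hbm : ι b ≤ m := by have := hlt b hb; omega
      have h1 : ∑ j ∈ Finset.Ico (ι b) m, (ρ (j+1) - ρ j) = ρ m - ρ (ι b) := by
        rw [Finset.sum_Ico_eq_sub _ hbm, Finset.sum_range_sub, Finset.sum_range_sub]
        ring
      have hset : (Finset.range m).filter (fun j => ι b ≤ j) = Finset.Ico (ι b) m := by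
        ext j
        simp only [Finset.mem_filter, Finset.mem_range, Finset.mem_Ico]
        tauto
      have h2 : ∑ j ∈ Finset.range m, (if ι b ≤ j then ρ j - ρ (j+1) else 0)
          = ∑ j ∈ Finset.Ico (ι b) m, (ρ j - ρ (j+1)) := by
        rw [← Finset.sum_filter, hset]
      have h3 : ∑ j ∈ Finset.Ico (ι b) m, (ρ j - ρ (j+1))
          = -∑ j ∈ Finset.Ico (ι b) m, (ρ (j+1) - ρ j) := by
        rw [← Finset.sum_neg_distrib]
        apply Finset.sum_congr rfl
        intros; ring
      rw [h2, h3, h1]; ring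
    rw [Finset.sum_congr rfl key, Finset.sum_add_distrib, Finset.sum_const, Finset.sum_comm]
    have hcardS : S.card ≤ m + 1 := by
      have := hcount (m+1) le_rfl
      rwa [Finset.filter_true_of_mem hlt] at this
    have hterm : ∀ j ∈ Finset.range m,
        (∑ b ∈ S, if ι b ≤ j then ρ j - ρ (j+1) else 0)
          ≤ ((j:ℝ)+1) * (ρ j - ρ (j+1)) := by
      intro j hj
      rw [Finset.mem_range] at hj
      rw [← Finset.sum_filter, Finset.sum_const, nsmul_eq_mul]
      have hd : 0 ≤ ρ j - ρ (j+1) := by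
        have := hanti j (by omega); linarith
      have hc : (S.filter (fun b => ι b ≤ j)).card ≤ j + 1 := by
        have h4 : S.filter (fun b => ι b ≤ j) = S.filter (fun b => ι b < j + 1) := by
          apply Finset.filter_congr; intro b _; simp [Nat.lt_succ_iff]
        rw [h4]; exact hcount (j+1) (by omega)
      have hc' : ((S.filter (fun b => ι b ≤ j)).card : ℝ) ≤ (j:ℝ) + 1 := by
        exact_mod_cast hc
      exact mul_le_mul_of_nonneg_right hc' hd
    have hsum := Finset.sum_le_sum hterm
    rw [abel_id ρ m, nsmul_eq_mul]
    have hρm : 0 ≤ ρ m := hpos m (by omega)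
    have hcS : (S.card : ℝ) ≤ (m : ℝ) + 1 := by exact_mod_cast hcardS
    have h6 : (S.card : ℝ) * ρ m ≤ ((m:ℝ)+1) * ρ m := mul_le_mul_of_nonneg_right hcS hρm
    linarith


/-- Fisher–Nemhauser–Wolsey: greedy maximization of a monotone submodular function
over a matroid is a 2-approximation.  The matroid is given by an independence
predicate `Indep` satisfying the matroid axioms; the greedy run is recorded by the
list `l` of chosen elements (in order of insertion): each prefix is independent,
each chosen element maximizes the new value among feasible augmentations, and at
termination no feasible augmentation increases the value.  Then the greedy set
`A = l.toFinset` satisfies `f B ≤ 2 · f A` for every independent set `B`. -/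
theorem greedy_two_approx
    (Indep : Finset E → Prop)
    (hempty : Indep ∅)
    (hdown : ∀ S T : Finset E, S ⊆ T → Indep T → Indep S)
    (hexch : ∀ S T : Finset E, Indep S → Indep T → S.card < T.card →
      ∃ e ∈ T \ S, Indep (insert e S))
    (f : Finset E → ℝ)
    (hf0 : f ∅ = 0)
    (hmono : ∀ S T : Finset E, S ⊆ T → f S ≤ f T)
    (hsub : ∀ S T : Finset E, S ⊆ T → ∀ e, e ∉ T →
      f (insert e T) - f T ≤ f (insert e S) - f S)
    (l : List E) (hnodup : l.Nodup)
    (hindep : ∀ n ≤ l.length, Indep (l.take n).toFinset)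
    (hgreedy : ∀ n (hn : n < l.length), ∀ e, e ∉ (l.take n).toFinset →
      Indep (insert e (l.take n).toFinset) →
      f (insert e (l.take n).toFinset) ≤ f (insert (l.get ⟨n, hn⟩) (l.take n).toFinset))
    (hstop : ∀ e, e ∉ l.toFinset → Indep (insert e l.toFinset) →
      f (insert e l.toFinset) ≤ f l.toFinset) :
    ∀ B : Finset E, Indep B → f B ≤ 2 * f l.toFinset := by
  classical
  intro B hB
  set k := l.length with hk
  set ρ : ℕ → ℝ := fun j => f (l.take (j+1)).toFinset - f (l.take j).toFinset with hρ
  have hAk : (l.take k).toFinset = l.toFinset := by rw [hk, List.take_length]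
  have hρpos : ∀ j, j < k → 0 ≤ ρ j := by
    intro j _
    have := hmono _ _ (take_toFinset_mono l (Nat.le_succ j))
    simp only [hρ]; linarith
  have hρanti : ∀ j, j + 1 < k → ρ (j+1) ≤ ρ j := by
    intro j hj1
    have hj : j < k := by omega
    set e := l.get ⟨j+1, hj1⟩ with he
    have h1 : (l.take (j+2)).toFinset = insert e (l.take (j+1)).toFinset :=
      take_toFinset_succ l hj1
    have hem : e ∉ (l.take (j+1)).toFinset := get_not_mem_take l hnodup hj1
    have hsub1 : f (insert e (l.take (j+1)).toFinset) - f (l.take (j+1)).toFinset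
        ≤ f (insert e (l.take j).toFinset) - f (l.take j).toFinset :=
      hsub _ _ (take_toFinset_mono l (Nat.le_succ j)) e hem
    have hemj : e ∉ (l.take j).toFinset :=
      fun h => hem (take_toFinset_mono l (Nat.le_succ j) h)
    have hins : Indep (insert e (l.take j).toFinset) := by
      apply hdown _ (l.take (j+2)).toFinset _ (hindep (j+2) (by omega))
      rw [h1]
      exact Finset.insert_subset_insert e (take_toFinset_mono l (by omega))
    have hg := hgreedy j hj e hemj hins
    rw [← take_toFinset_succ l hj] at hg
    simp only [hρ]
    rw [h1]
    linarith
  have hfA : f l.toFinset = ∑ j ∈ Finset.range k, ρ j := by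
    have h := Finset.sum_range_sub (fun i => f (l.take i).toFinset) k
    simp only [hρ]
    rw [h]
    simp [hAk, hf0]
  set ι : E → ℕ := fun b => Nat.findGreatest (fun i => Indep (insert b (l.take i).toFinset)) k
    with hι
  have hιle : ∀ b, ι b ≤ k := fun b => Nat.findGreatest_le k
  have hιspec : ∀ b ∈ B, Indep (insert b (l.take (ι b)).toFinset) := by
    intro b hb
    have h0 : Indep (insert b (l.take 0).toFinset) := by
      have heq : insert b (l.take 0).toFinset = {b} := by simp
      rw [heq]
      exact hdown {b} B (Finset.singleton_subset_iff.mpr hb) hB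
    simp only [hι]
    exact Nat.findGreatest_spec (P := fun i => Indep (insert b (l.take i).toFinset))
      (Nat.zero_le k) h0
  have hιgreatest : ∀ b, ∀ i, ι b < i → i ≤ k → ¬ Indep (insert b (l.take i).toFinset) := by
    intro b i h1 h2
    simp only [hι] at h1
    exact Nat.findGreatest_is_greatest h1 h2
  have hmarg : ∀ b ∈ B, f (insert b l.toFinset) - f l.toFinset
      ≤ (if b ∉ l.toFinset ∧ ι b < k then ρ (ι b) else 0) := by
    intro b hb
    by_cases hbA : b ∈ l.toFinset
    · simp [hbA, Finset.insert_eq_self.2 hbA]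
    · by_cases hbk : ι b < k
      · simp only [hbA, not_false_iff, hbk, and_self, if_true]
        have hsubm : f (insert b l.toFinset) - f l.toFinset
            ≤ f (insert b (l.take (ι b)).toFinset) - f (l.take (ι b)).toFinset := by
          apply hsub _ _ _ b hbA
          intro x hx
          exact (List.mem_toFinset).2 (List.take_subset _ _ ((List.mem_toFinset).1 hx))
        have hbmem : b ∉ (l.take (ι b)).toFinset := by
          intro h
          exact hbA ((List.mem_toFinset).2 (List.take_subset _ _ ((List.mem_toFinset).1 h)))
        have hg := hgreedy (ι b) hbk b hbmem (hιspec b hb)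
        rw [← take_toFinset_succ l hbk] at hg
        simp only [hρ]
        linarith
      · simp only [hbA, not_false_iff, hbk, and_false, if_false]
        have hik : ι b = k := le_antisymm (hιle b) (by omega)
        have hii := hιspec b hb
        rw [hik, hAk] at hii
        have := hstop b hbA hii
        linarith
  set S : Finset E := B.filter (fun b => b ∉ l.toFinset ∧ ι b < k) with hS
  have hcount : ∀ i ≤ k, (S.filter (fun b => ι b < i)).card ≤ i := by
    intro i hik
    by_contra hcon
    push_neg at hcon
    set C := S.filter (fun b => ι b < i) with hC
    have hCB : C ⊆ B := (Finset.filter_subset _ _).trans (Finset.filter_subset _ _)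
    have hCind : Indep C := hdown C B hCB hB
    have hAcard : (l.take i).toFinset.card < C.card := by
      have := take_toFinset_card l hnodup i
      omega
    obtain ⟨e, he, hins⟩ := hexch _ C (hindep i hik) hCind hAcard
    rw [Finset.mem_sdiff] at he
    have heC := he.1
    rw [hC, Finset.mem_filter] at heC
    exact hιgreatest e i heC.2 hik hins
  have h1 : f B ≤ f (l.toFinset ∪ B) := hmono _ _ Finset.subset_union_right
  have h2 := union_marg f hmono hsub l.toFinset B
  have h3 : ∑ b ∈ B, (f (insert b l.toFinset) - f l.toFinset)
      ≤ ∑ b ∈ B, (if b ∉ l.toFinset ∧ ι b < k then ρ (ι b) else 0) :=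
    Finset.sum_le_sum hmarg
  have h4 : ∑ b ∈ B, (if b ∉ l.toFinset ∧ ι b < k then ρ (ι b) else 0)
      = ∑ b ∈ S, ρ (ι b) := by
    rw [hS, Finset.sum_filter]
  have h5 : ∑ b ∈ S, ρ (ι b) ≤ ∑ j ∈ Finset.range k, ρ j := by
    apply charge_sum_le ρ k hρpos hρanti S ι _ hcount
    intro b hb
    rw [hS, Finset.mem_filter] at hb
    exact hb.2.2
  rw [← hfA] at h5
  linarith
end
end

section
/- In the single-capacity setting, let OPT be the optimal value, decomposed in an Almost Discrete optimal solution as the contribution of fully utilized blocks (y = γ) plus the contribution of the at most one under-utilized block. Then max{ value of best Discrete solution, max_{j,k} (1/R_j)·min{γ_{jk}, C} } ≥ OPT/2. -/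
variable {J K : Type*}

section
variable [Fintype J] [Fintype K] [Nonempty J] [Nonempty K]

/-- A feasible solution is Discrete if `y j k = γ j k · x j k` for every block. -/
def Discrete (γ : J → K → ℝ) (x : J → K → Bool) (y : J → K → ℝ) : Prop :=
  ∀ j k, y j k = γ j k * (if x j k then 1 else 0)

lemma greedy_split {α : Type*} [DecidableEq α] (w g : α → ℝ) (C : ℝ) (hC : 0 ≤ C) :
    ∀ A : Finset α, C < ∑ a ∈ A, g a →
    ∃ S : Finset α, S ⊆ A ∧ ∃ b ∈ A, b ∉ S ∧ (∑ a ∈ S, g a) ≤ C ∧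
      C < (∑ a ∈ S, g a) + g b ∧ (∀ a ∈ S, w b ≤ w a) ∧ (∀ a ∈ A, a ∉ S → w a ≤ w b) := by
  intro A
  induction A using Finset.strongInduction with
  | _ A ih =>
    intro hA
    have hne : A.Nonempty := by
      rcases A.eq_empty_or_nonempty with h | h
      · simp [h] at hA; linarith
      · exact h
    obtain ⟨a0, ha0A, ha0min⟩ := A.exists_min_image w hne
    by_cases hcase : (∑ a ∈ A.erase a0, g a) ≤ C
    · refine ⟨A.erase a0, Finset.erase_subset _ _, a0, ha0A, Finset.notMem_erase _ _, hcase,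
        ?_, ?_, ?_⟩
      · rw [Finset.sum_erase_add A g ha0A]; exact hA
      · intro a ha; exact ha0min a (Finset.mem_of_mem_erase ha)
      · intro a haA hanot
        have : a = a0 := by
          by_contra h
          exact hanot (Finset.mem_erase.mpr ⟨h, haA⟩)
        simp [this]
    · push_neg at hcase
      obtain ⟨S, hSsub, b, hbA, hbS, h1, h2, h3, h4⟩ :=
        ih (A.erase a0) (Finset.erase_ssubset ha0A) hcase
      refine ⟨S, hSsub.trans (Finset.erase_subset _ _), b, Finset.mem_of_mem_erase hbA, hbS,
        h1, h2, h3, ?_⟩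
      intro a haA hanot
      by_cases h : a = a0
      · subst h; exact ha0min b (Finset.mem_of_mem_erase hbA)
      · exact h4 a (Finset.mem_erase.mpr ⟨h, haA⟩) hanot

/-- The better of the best Discrete solution and the best single-block solution is
within a factor 2 of the optimum:
`max{D, max_{j,k} (1/R_j)·min(γ_{jk}, C)} ≥ OPT/2`. -/
theorem discrete_or_single_block_two_approx
    (R : J → ℝ) (hR : ∀ j, 0 < R j)
    (γ : J → K → ℝ) (hγ : ∀ j k, 0 ≤ γ j k)
    (C : ℝ) (hC : 0 < C)
    (D : ℝ)
    (hD : IsGreatest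
      {v : ℝ | ∃ x y, Feasible γ C x y ∧ Discrete γ x y ∧ v = ∑ j, ∑ k, y j k / R j} D)
    (Fmax : ℝ)
    (hFmax : Fmax = Finset.univ.sup' Finset.univ_nonempty
      (fun p : J × K => (1 / R p.1) * min (γ p.1 p.2) C)) :
    ∀ x y, Feasible γ C x y →
      (1 / 2) * (∑ j, ∑ k, y j k / R j) ≤ max D Fmax := by
  classical
  intro x y hfeas
  obtain ⟨hx, hy, hcap⟩ := hfeas
  set w : J × K → ℝ := fun p => 1 / R p.1 with hw
  have hwpos : ∀ p : J × K, 0 < w p := fun p => by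
    have := hR p.1
    simp only [hw]; positivity
  set A : Finset (J × K) := Finset.univ.filter (fun p : J × K => x p.1 p.2 = true) with hA
  have hyzero : ∀ p : J × K, p ∉ A → y p.1 p.2 = 0 := by
    intro p hp
    have hxp : ¬ (x p.1 p.2 = true) := by
      simpa [hA] using hp
    have h2 := (hy p.1 p.2).2
    rw [if_neg hxp] at h2
    have h1 := (hy p.1 p.2).1
    linarith [h2]
  -- rewrite double sums as sums over J × K
  have hsum_prod : ∀ f : J → K → ℝ, (∑ j, ∑ k, f j k) = ∑ p : J × K, f p.1 p.2 := by
    intro f; rw [Fintype.sum_prod_type]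
  have htotal : (∑ j, ∑ k, y j k / R j) = ∑ p ∈ A, w p * y p.1 p.2 := by
    rw [hsum_prod]
    rw [← Finset.sum_subset (Finset.subset_univ A)
      (fun p _ hp => by rw [hyzero p hp]; simp)]
    refine Finset.sum_congr rfl fun p _ => ?_
    simp [hw, div_eq_mul_inv, mul_comm]
  have hcapA : (∑ p ∈ A, y p.1 p.2) ≤ C := by
    calc (∑ p ∈ A, y p.1 p.2) = ∑ p : J × K, y p.1 p.2 :=
          Finset.sum_subset (Finset.subset_univ A) (fun p _ hp => hyzero p hp)
      _ ≤ C := by rw [← hsum_prod]; exact hcap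
  have hynn : ∀ p : J × K, 0 ≤ y p.1 p.2 := fun p => (hy p.1 p.2).1
  have hyleγ : ∀ p ∈ A, y p.1 p.2 ≤ γ p.1 p.2 := by
    intro p hp
    have hxp : x p.1 p.2 = true := by simpa [hA] using hp
    have h2 := (hy p.1 p.2).2
    rw [if_pos hxp, mul_one] at h2
    exact h2
  -- any subset of A with total size ≤ C gives a Discrete solution, so its value ≤ D
  have key : ∀ S : Finset (J × K), S ⊆ A → (∑ p ∈ S, γ p.1 p.2) ≤ C →
      (∑ p ∈ S, w p * γ p.1 p.2) ≤ D := by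
    intro S hSA hSC
    apply hD.2
    refine ⟨fun j k => decide ((j, k) ∈ S), fun j k => if (j, k) ∈ S then γ j k else 0,
      ⟨?_, ?_, ?_⟩, ?_, ?_⟩
    · intro k j j' hj hj'
      have hj1 : ((j, k) : J × K) ∈ S := by simpa using hj
      have hj1' : ((j', k) : J × K) ∈ S := by simpa using hj'
      have hx1 : x j k = true := by simpa [hA] using hSA hj1
      have hx2 : x j' k = true := by simpa [hA] using hSA hj1'
      exact hx k j j' hx1 hx2
    · intro j k
      by_cases h : ((j, k) : J × K) ∈ S <;> simp [h, hγ j k]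
    · have : (∑ j, ∑ k, if ((j, k) : J × K) ∈ S then γ j k else 0)
          = ∑ p ∈ S, γ p.1 p.2 := by
        rw [hsum_prod (fun j k => if ((j, k) : J × K) ∈ S then γ j k else 0)]
        rw [Finset.sum_ite_mem, Finset.univ_inter]
      rw [this]; exact hSC
    · intro j k
      by_cases h : ((j, k) : J × K) ∈ S <;> simp [h]
    · rw [hsum_prod (fun j k => (if ((j, k) : J × K) ∈ S then γ j k else 0) / R j)]
      have : (∑ p : J × K, (if p ∈ S then γ p.1 p.2 else 0) / R p.1)
          = ∑ p ∈ S, γ p.1 p.2 / R p.1 := by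
        rw [show (∑ p : J × K, (if p ∈ S then γ p.1 p.2 else 0) / R p.1)
            = ∑ p : J × K, (if p ∈ S then γ p.1 p.2 / R p.1 else 0) from
          Finset.sum_congr rfl fun p _ => by by_cases h : p ∈ S <;> simp [h]]
        rw [Finset.sum_ite_mem, Finset.univ_inter]
      rw [this]
      refine Finset.sum_congr rfl fun p _ => ?_
      simp [hw, div_eq_mul_inv, mul_comm]
  -- D is nonnegative
  have hD0 : 0 ≤ D := by
    have := key ∅ (Finset.empty_subset A) (by simpa using le_of_lt hC)
    simpa using this
  -- Fmax bounds each single block value and is nonnegative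
  have hFb : ∀ p : J × K, w p * min (γ p.1 p.2) C ≤ Fmax := by
    intro p
    rw [hFmax]
    exact Finset.le_sup' (fun p : J × K => (1 / R p.1) * min (γ p.1 p.2) C)
      (Finset.mem_univ p)
  have hF0 : 0 ≤ Fmax := by
    obtain ⟨p⟩ : Nonempty (J × K) := inferInstance
    refine le_trans ?_ (hFb p)
    have := hwpos p
    have : 0 ≤ min (γ p.1 p.2) C := le_min (hγ p.1 p.2) (le_of_lt hC)
    positivity
  -- main estimate : total ≤ D + Fmax
  have hmain : (∑ p ∈ A, w p * y p.1 p.2) ≤ D + Fmax := by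
    by_cases hfit : (∑ p ∈ A, γ p.1 p.2) ≤ C
    · have h1 : (∑ p ∈ A, w p * y p.1 p.2) ≤ ∑ p ∈ A, w p * γ p.1 p.2 :=
        Finset.sum_le_sum fun p hp =>
          mul_le_mul_of_nonneg_left (hyleγ p hp) (le_of_lt (hwpos p))
      have h2 := key A (le_refl A) hfit
      linarith
    · push_neg at hfit
      obtain ⟨S, hSA, b, hbA, hbS, hS1, hS2, hS3, hS4⟩ :=
        greedy_split w (fun p : J × K => γ p.1 p.2) C (le_of_lt hC) A hfit
      have hDS := key S hSA hS1
      -- split the sum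
      have hsplit : (∑ p ∈ A, w p * y p.1 p.2)
          = (∑ p ∈ A, (w p - w b) * y p.1 p.2) + w b * (∑ p ∈ A, y p.1 p.2) := by
        rw [Finset.mul_sum, ← Finset.sum_add_distrib]
        refine Finset.sum_congr rfl fun p _ => by ring
      have hterm : (∑ p ∈ A, (w p - w b) * y p.1 p.2)
          ≤ ∑ p ∈ S, (w p - w b) * γ p.1 p.2 := by
        have hsd : (∑ p ∈ A \ S, (w p - w b) * y p.1 p.2)
            + ∑ p ∈ S, (w p - w b) * y p.1 p.2
            = ∑ p ∈ A, (w p - w b) * y p.1 p.2 := Finset.sum_sdiff hSA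
        have h1 : (∑ p ∈ A \ S, (w p - w b) * y p.1 p.2) ≤ 0 := by
          apply Finset.sum_nonpos
          intro p hp
          obtain ⟨hpA, hpS⟩ := Finset.mem_sdiff.mp hp
          have hwle : w p ≤ w b := hS4 p hpA hpS
          have hyn := hynn p
          nlinarith
        have h2 : (∑ p ∈ S, (w p - w b) * y p.1 p.2)
            ≤ ∑ p ∈ S, (w p - w b) * γ p.1 p.2 :=
          Finset.sum_le_sum fun p hp =>
            mul_le_mul_of_nonneg_left (hyleγ p (hSA hp)) (by linarith [hS3 p hp])
        linarith
      have hSsum : (∑ p ∈ S, (w p - w b) * γ p.1 p.2)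
          = (∑ p ∈ S, w p * γ p.1 p.2) - w b * (∑ p ∈ S, γ p.1 p.2) := by
        rw [Finset.mul_sum, ← Finset.sum_sub_distrib]
        refine Finset.sum_congr rfl fun p _ => by ring
      have hwb := hwpos b
      have hcapbound : w b * (∑ p ∈ A, y p.1 p.2) ≤ w b * C :=
        mul_le_mul_of_nonneg_left hcapA (le_of_lt hwb)
      have hrem : w b * (C - (∑ p ∈ S, γ p.1 p.2)) ≤ w b * min (γ b.1 b.2) C := by
        apply mul_le_mul_of_nonneg_left _ (le_of_lt hwb)
        apply le_min
        · linarith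
        · have : 0 ≤ ∑ p ∈ S, γ p.1 p.2 :=
            Finset.sum_nonneg fun p _ => hγ p.1 p.2
          linarith
      have hFrem := hFb b
      calc (∑ p ∈ A, w p * y p.1 p.2)
          = (∑ p ∈ A, (w p - w b) * y p.1 p.2) + w b * (∑ p ∈ A, y p.1 p.2) := hsplit
        _ ≤ (∑ p ∈ S, (w p - w b) * γ p.1 p.2) + w b * C := by linarith
        _ = (∑ p ∈ S, w p * γ p.1 p.2) + w b * (C - (∑ p ∈ S, γ p.1 p.2)) := by
            rw [hSsum]; ring
        _ ≤ D + Fmax := by linarith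
  rw [htotal]
  have h1 : D ≤ max D Fmax := le_max_left _ _
  have h2 : Fmax ≤ max D Fmax := le_max_right _ _
  linarith
end
end
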